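/- arXiv:2509.00265 — 13 statements merged into one kernel-verified Lean document; each statement's English description precedes it below -/
import Mathlib

section
/- Let P be a finite partially ordered set with p elements. The order cone C(P) is a simplicial cone — that is, there exists a linearly independent family of p vectors in ℝ^P whose set of nonnegative linear combinations equals C(P) — if and only if the Hasse diagram of P contains no collider, i.e., there do not exist elements a, b, c of P with a ≠ b, a ⋖ c, and b ⋖ c. -/
/-- The order cone of a finite poset: nonnegative, nondecreasing real-valued functions. -/
def orderCone (P : Type*) [PartialOrder P] : Set (P → ℝ) :=
  {f | (∀ x, 0 ≤ f x) ∧ ∀ ⦃x y : P⦄, x ≤ y → f x ≤ f y}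

open Classical in
/-- Indicator function of a set, as a real-valued function. -/
noncomputable def oc_ind {P : Type*} (S : Set P) : P → ℝ := fun y => if y ∈ S then 1 else 0

section Aux

variable {P : Type*} [PartialOrder P]

lemma oc_ind_nonneg (S : Set P) (y : P) : 0 ≤ oc_ind S y := by
  unfold oc_ind; split <;> norm_num

lemma oc_ind_of_mem {S : Set P} {y : P} (h : y ∈ S) : oc_ind S y = 1 := by
  unfold oc_ind; rw [if_pos h]

lemma oc_ind_of_notMem {S : Set P} {y : P} (h : y ∉ S) : oc_ind S y = 0 := by
  unfold oc_ind; rw [if_neg h]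

lemma oc_ind_mem_orderCone {S : Set P} (hS : ∀ ⦃x y : P⦄, x ≤ y → x ∈ S → y ∈ S) :
    oc_ind S ∈ orderCone P := by
  refine ⟨oc_ind_nonneg S, fun x y hxy => ?_⟩
  by_cases hx : x ∈ S
  · rw [oc_ind_of_mem hx, oc_ind_of_mem (hS hxy hx)]
  · rw [oc_ind_of_notMem hx]; exact oc_ind_nonneg S y

lemma oc_ext_const_on {S : Set P} {u w : P → ℝ}
    (hu : u ∈ orderCone P) (hw : w ∈ orderCone P)
    (huw : u + w = oc_ind S) {x y : P} (hx : x ∈ S) (hy : y ∈ S) (hxy : x ≤ y) :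
    u y = u x := by
  have h1 : u x + w x = 1 := by
    have := congrFun huw x; rwa [Pi.add_apply, oc_ind_of_mem hx] at this
  have h2 : u y + w y = 1 := by
    have := congrFun huw y; rwa [Pi.add_apply, oc_ind_of_mem hy] at this
  have h3 := hu.2 hxy
  have h4 := hw.2 hxy
  linarith

lemma oc_extreme_principal (x : P) {u w : P → ℝ}
    (hu : u ∈ orderCone P) (hw : w ∈ orderCone P)
    (huw : u + w = oc_ind {y | x ≤ y}) :
    u = u x • oc_ind {y | x ≤ y} := by
  funext y
  by_cases h : x ≤ y
  · rw [Pi.smul_apply, oc_ind_of_mem (S := {y | x ≤ y}) h, smul_eq_mul, mul_one]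
    exact oc_ext_const_on hu hw huw (le_refl x) h h
  · rw [Pi.smul_apply, oc_ind_of_notMem (S := {y | x ≤ y}) h, smul_eq_mul, mul_zero]
    have h1 := congrFun huw y
    rw [Pi.add_apply, oc_ind_of_notMem (S := {y | x ≤ y}) h] at h1
    have h2 := hu.1 y
    have h3 := hw.1 y
    linarith only [h1, h2, h3]

lemma oc_extreme_union {a b c : P} (hac : a ⋖ c) (hbc : b ⋖ c) {u w : P → ℝ}
    (hu : u ∈ orderCone P) (hw : w ∈ orderCone P)
    (huw : u + w = oc_ind ({y | a ≤ y} ∪ {y | b ≤ y})) :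
    u = u c • oc_ind ({y | a ≤ y} ∪ {y | b ≤ y}) := by
  have ha : a ∈ {y | a ≤ y} ∪ {y | b ≤ y} := Or.inl (le_refl a)
  have hb : b ∈ {y | a ≤ y} ∪ {y | b ≤ y} := Or.inr (le_refl b)
  have hc : c ∈ {y | a ≤ y} ∪ {y | b ≤ y} := Or.inl hac.le
  have hca : u c = u a := oc_ext_const_on hu hw huw ha hc hac.le
  have hcb : u c = u b := oc_ext_const_on hu hw huw hb hc hbc.le
  funext y
  by_cases h : y ∈ {y | a ≤ y} ∪ {y | b ≤ y}
  · rw [Pi.smul_apply, oc_ind_of_mem h, smul_eq_mul, mul_one]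
    rcases h with h | h
    · rw [oc_ext_const_on hu hw huw ha (Or.inl h) h, hca]
    · rw [oc_ext_const_on hu hw huw hb (Or.inr h) h, hcb]
  · rw [Pi.smul_apply, oc_ind_of_notMem h, smul_eq_mul, mul_zero]
    have h1 := congrFun huw y
    rw [Pi.add_apply, oc_ind_of_notMem h] at h1
    have h2 := hu.1 y
    have h3 := hw.1 y
    linarith

end Aux

/-- In a simplicial cone equal to the order cone, every extreme element lies on a
generator ray. -/
lemma oc_simplicial_extreme {P : Type*} [Fintype P] [PartialOrder P] {p : ℕ}
    {v : Fin p → (P → ℝ)} (hv : LinearIndependent ℝ v)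
    (hset : {f : P → ℝ | ∃ c : Fin p → ℝ, (∀ i, 0 ≤ c i) ∧ f = ∑ i, c i • v i} = orderCone P)
    {f : P → ℝ} (hf0 : f ≠ 0)
    (hext : ∀ u w : P → ℝ, u ∈ orderCone P → w ∈ orderCone P → u + w = f →
      ∃ t : ℝ, u = t • f)
    (hf : f ∈ orderCone P) :
    ∃ j : Fin p, ∃ t : ℝ, 0 < t ∧ f = t • v j := by
  classical
  rw [← hset] at hf
  obtain ⟨c, hc, hfc⟩ := hf
  have hex : ∃ j, c j ≠ 0 := by
    by_contra hall
    push_neg at hall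
    exact hf0 (by rw [hfc]; simp [hall])
  obtain ⟨j, hj⟩ := hex
  set u : P → ℝ := ∑ i, (if i = j then c i else 0) • v i with hu_def
  set w : P → ℝ := ∑ i, (if i = j then 0 else c i) • v i with hw_def
  have hu_eq : u = c j • v j := by
    rw [hu_def]
    rw [Finset.sum_eq_single j (fun i _ hij => by rw [if_neg hij, zero_smul])
      (fun h => absurd (Finset.mem_univ j) h)]
    rw [if_pos rfl]
  have hu : u ∈ orderCone P := by
    rw [← hset]
    exact ⟨fun i => if i = j then c i else 0,
      fun i => by dsimp only; split <;> [exact hc i; exact le_refl 0], rfl⟩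
  have hw : w ∈ orderCone P := by
    rw [← hset]
    exact ⟨fun i => if i = j then 0 else c i,
      fun i => by dsimp only; split <;> [exact le_refl 0; exact hc i], rfl⟩
  have huwf : u + w = f := by
    rw [hu_def, hw_def, hfc, ← Finset.sum_add_distrib]
    apply Finset.sum_congr rfl
    intro i _
    rw [← add_smul]
    congr 1
    split <;> ring
  obtain ⟨t, hut⟩ := hext u w hu hw huwf
  have hzero : ∀ i, (if i = j then c i else 0) - t * c i = 0 := by
    apply Fintype.linearIndependent_iff.mp hv
    have : ∀ i : Fin p, ((if i = j then c i else 0) - t * c i) • v i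
        = (if i = j then c i else 0) • v i - t • (c i • v i) := by
      intro i; rw [sub_smul, smul_smul]
    rw [Finset.sum_congr rfl fun i _ => this i, Finset.sum_sub_distrib,
      ← Finset.smul_sum, ← hu_def, ← hfc, hut, sub_self]
  have ht1 : t = 1 := by
    have := hzero j
    rw [if_pos rfl] at this
    have : c j * (1 - t) = 0 := by ring_nf; ring_nf at this; linarith
    rcases mul_eq_zero.mp this with h | h
    · exact absurd h hj
    · linarith
  have hci : ∀ i, i ≠ j → c i = 0 := by
    intro i hij
    have := hzero i
    rw [if_neg hij, ht1] at this
    linarith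
  have hfj : f = c j • v j := by
    rw [hfc, Finset.sum_eq_single j (fun i _ hij => by rw [hci i hij, zero_smul])
      (fun h => absurd (Finset.mem_univ j) h)]
  exact ⟨j, c j, lt_of_le_of_ne (hc j) (Ne.symm hj), hfj⟩

lemma oc_not_prop_principal {P : Type*} [PartialOrder P] {x y : P} (hxy : x ≠ y)
    {r : ℝ} (hr : 0 < r) (h : oc_ind {z | x ≤ z} = r • oc_ind {z | y ≤ z}) : False := by
  have h1 := congrFun h y
  have h2 := congrFun h x
  rw [Pi.smul_apply, oc_ind_of_mem (S := {z | y ≤ z}) (le_refl y), smul_eq_mul,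
    mul_one] at h1
  rw [Pi.smul_apply, oc_ind_of_mem (S := {z | x ≤ z}) (le_refl x), smul_eq_mul] at h2
  have hxley : x ≤ y := by
    by_contra hn
    rw [oc_ind_of_notMem (S := {z | x ≤ z}) hn] at h1
    exact ne_of_gt hr h1.symm
  have hylex : y ≤ x := by
    by_contra hn
    rw [oc_ind_of_notMem (S := {z | y ≤ z}) hn, mul_zero] at h2
    norm_num at h2
  exact hxy (le_antisymm hxley hylex)

lemma oc_not_prop_union {P : Type*} [PartialOrder P] {a b c : P} (hab : a ≠ b)
    (hac : a ⋖ c) (hbc : b ⋖ c) {x : P} {r : ℝ} (hr : 0 < r)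
    (h : oc_ind ({y | a ≤ y} ∪ {y | b ≤ y}) = r • oc_ind {z | x ≤ z}) : False := by
  have hxa : x ≤ a := by
    have h1 := congrFun h a
    rw [oc_ind_of_mem (S := {y | a ≤ y} ∪ {y | b ≤ y}) (Or.inl (le_refl a)),
      Pi.smul_apply, smul_eq_mul] at h1
    by_contra hn
    rw [oc_ind_of_notMem (S := {z | x ≤ z}) hn, mul_zero] at h1
    norm_num at h1
  have hxb : x ≤ b := by
    have h1 := congrFun h b
    rw [oc_ind_of_mem (S := {y | a ≤ y} ∪ {y | b ≤ y}) (Or.inr (le_refl b)),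
      Pi.smul_apply, smul_eq_mul] at h1
    by_contra hn
    rw [oc_ind_of_notMem (S := {z | x ≤ z}) hn, mul_zero] at h1
    norm_num at h1
  have hx : x ∈ {y | a ≤ y} ∪ {y | b ≤ y} := by
    have h1 := congrFun h x
    rw [Pi.smul_apply, oc_ind_of_mem (S := {z | x ≤ z}) (le_refl x), smul_eq_mul,
      mul_one] at h1
    by_contra hn
    rw [oc_ind_of_notMem (S := {y | a ≤ y} ∪ {y | b ≤ y}) hn] at h1
    exact ne_of_gt hr h1.symm
  rcases hx with hx | hx
  · have hxa' : x = a := le_antisymm hxa hx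
    subst hxa'
    exact hac.2 (lt_of_le_of_ne hxb hab) hbc.lt
  · have hxb' : x = b := le_antisymm hxb hx
    subst hxb'
    exact hbc.2 (lt_of_le_of_ne hxa (Ne.symm hab)) hac.lt

/-- In a finite poset, below any strict inequality there is a covering step at the top. -/
lemma oc_exists_covBy {P : Type*} [Fintype P] [PartialOrder P] {y : P} :
    ∀ x : P, x < y → ∃ z, x ≤ z ∧ z ⋖ y := by
  intro x
  refine WellFounded.induction (wellFounded_gt (α := P))
    (C := fun x => x < y → ∃ z, x ≤ z ∧ z ⋖ y) x ?_
  intro x ih hxy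
  by_cases hc : x ⋖ y
  · exact ⟨x, le_refl x, hc⟩
  · obtain ⟨z, hxz, hzy⟩ := (not_covBy_iff hxy).mp hc
    obtain ⟨w, hzw, hwy⟩ := ih z hxz hzy
    exact ⟨w, hxz.le.trans hzw, hwy⟩

open Classical in
lemma oc_sum_eval {P : Type*} [Fintype P] [PartialOrder P] (d : P → ℝ) (y : P) :
    (∑ x : P, d x • oc_ind {z | x ≤ z}) y = ∑ x ∈ Finset.univ.filter (· ≤ y), d x := by
  rw [Finset.sum_apply, Finset.sum_filter]
  apply Finset.sum_congr rfl
  intro x _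
  by_cases h : x ≤ y
  · rw [Pi.smul_apply, oc_ind_of_mem (S := {z | x ≤ z}) h, smul_eq_mul, mul_one, if_pos h]
  · rw [Pi.smul_apply, oc_ind_of_notMem (S := {z | x ≤ z}) h, smul_eq_mul, mul_zero,
      if_neg h]

open Classical in
lemma oc_filter_le_eq {P : Type*} [Fintype P] [PartialOrder P] (y : P) :
    Finset.univ.filter (· ≤ y) = insert y (Finset.univ.filter (· < y)) := by
  ext x
  simp only [Finset.mem_filter, Finset.mem_insert, Finset.mem_univ, true_and]
  rw [le_iff_lt_or_eq]
  tauto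

open Classical in
lemma oc_principal_li {P : Type*} [Fintype P] [PartialOrder P] :
    LinearIndependent ℝ (fun x : P => oc_ind {z | x ≤ z}) := by
  rw [Fintype.linearIndependent_iff]
  intro g hg
  refine fun y => WellFounded.induction (wellFounded_lt (α := P))
    (C := fun y => g y = 0) y ?_
  intro y ih
  have h1 : ∑ x ∈ Finset.univ.filter (· ≤ y), g x = 0 := by
    rw [← oc_sum_eval g y, hg]; rfl
  rw [oc_filter_le_eq, Finset.sum_insert (by simp)] at h1
  have h2 : ∑ x ∈ Finset.univ.filter (· < y), g x = 0 :=
    Finset.sum_eq_zero fun x hx => ih x (Finset.mem_filter.mp hx).2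
  linarith

open Classical in
/-- The natural coefficient of `f` at `x`: the jump over the (unique) lower cover. -/
noncomputable def oc_d {P : Type*} [PartialOrder P] (f : P → ℝ) (x : P) : ℝ :=
  f x - if h : ∃ z, z ⋖ x then f h.choose else 0

lemma oc_d_nonneg {P : Type*} [PartialOrder P] {f : P → ℝ} (hf : f ∈ orderCone P) (x : P) :
    0 ≤ oc_d f x := by
  unfold oc_d
  split
  · next h =>
      have h1 : f h.choose ≤ f x := hf.2 h.choose_spec.le
      linarith
  · have := hf.1 x; linarith

open Classical in
lemma oc_repr {P : Type*} [Fintype P] [PartialOrder P]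
    (huniq : ∀ ⦃a b c : P⦄, a ⋖ c → b ⋖ c → a = b)
    {f : P → ℝ} (hf : f ∈ orderCone P) :
    ∀ y : P, ∑ x ∈ Finset.univ.filter (· ≤ y), oc_d f x = f y := by
  refine fun y => WellFounded.induction (wellFounded_lt (α := P))
    (C := fun y => ∑ x ∈ Finset.univ.filter (· ≤ y), oc_d f x = f y) y ?_
  intro y ih
  rw [oc_filter_le_eq, Finset.sum_insert (by simp)]
  by_cases hy : ∃ z, z ⋖ y
  · have hm : hy.choose ⋖ y := hy.choose_spec
    have hfil : Finset.univ.filter (· < y) = Finset.univ.filter (· ≤ hy.choose) := by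
      ext x
      simp only [Finset.mem_filter, Finset.mem_univ, true_and]
      constructor
      · intro hx
        obtain ⟨z, hxz, hzy⟩ := oc_exists_covBy x hx
        rwa [huniq hzy hm] at hxz
      · intro hx
        exact lt_of_le_of_lt hx hm.lt
    rw [hfil, ih hy.choose hm.lt]
    unfold oc_d
    rw [dif_pos hy]
    ring
  · have hfil : Finset.univ.filter (· < y) = ∅ := by
      ext x
      simp only [Finset.mem_filter, Finset.mem_univ, true_and, Finset.notMem_empty,
        iff_false]
      intro hx
      obtain ⟨z, _, hzy⟩ := oc_exists_covBy x hx
      exact hy ⟨z, hzy⟩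
    rw [hfil, Finset.sum_empty]
    unfold oc_d
    rw [dif_neg hy]
    ring

/-- `C(P)` is a simplicial cone (generated by `p = |P|` linearly independent
vectors) iff the Hasse diagram of `P` contains no collider. -/
theorem orderCone_simplicial_iff_no_collider
    (P : Type*) [Fintype P] [PartialOrder P] (p : ℕ) (hp : Fintype.card P = p) :
    (∃ v : Fin p → (P → ℝ), LinearIndependent ℝ v ∧
      {f : P → ℝ | ∃ c : Fin p → ℝ, (∀ i, 0 ≤ c i) ∧ f = ∑ i, c i • v i} = orderCone P)
    ↔ ¬ ∃ a b c : P, a ≠ b ∧ a ⋖ c ∧ b ⋖ c := by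
  constructor
  · rintro ⟨v, hv, hset⟩ ⟨a, b, c, hab, hac, hbc⟩
    classical
    set F : Option P → (P → ℝ) := fun o =>
      Option.elim o (oc_ind ({y | a ≤ y} ∪ {y | b ≤ y})) (fun x => oc_ind {z | x ≤ z})
      with hF_def
    have key : ∀ o : Option P, ∃ j : Fin p, ∃ t : ℝ, 0 < t ∧ F o = t • v j := by
      intro o
      cases o with
      | none =>
          refine oc_simplicial_extreme hv hset ?_ ?_ ?_
          · intro h0
            have := congrFun h0 c
            rw [show F none = oc_ind ({y | a ≤ y} ∪ {y | b ≤ y}) from rfl] at this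
            rw [oc_ind_of_mem (S := {y | a ≤ y} ∪ {y | b ≤ y}) (Or.inl hac.le)] at this
            simp at this
          · intro u w hu hw huw
            exact ⟨u c, oc_extreme_union hac hbc hu hw huw⟩
          · refine oc_ind_mem_orderCone ?_
            rintro x y hxy (h | h)
            · exact Or.inl (h.trans hxy)
            · exact Or.inr (h.trans hxy)
      | some x =>
          refine oc_simplicial_extreme hv hset ?_ ?_ ?_
          · intro h0
            have := congrFun h0 x
            rw [show F (some x) = oc_ind {z | x ≤ z} from rfl] at this
            rw [oc_ind_of_mem (S := {z | x ≤ z}) (le_refl x)] at this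
            simp at this
          · intro u w hu hw huw
            exact ⟨u x, oc_extreme_principal x hu hw huw⟩
          · exact oc_ind_mem_orderCone fun z y hzy hz => le_trans hz hzy
    choose j t ht hF using key
    have hcard : Fintype.card (Fin p) < Fintype.card (Option P) := by
      simp [hp]
    obtain ⟨o₁, o₂, hne, hjj⟩ := Fintype.exists_ne_map_eq_of_card_lt j hcard
    have hprop : F o₁ = (t o₁ / t o₂) • F o₂ := by
      rw [hF o₂, smul_smul, div_mul_cancel₀ _ (ne_of_gt (ht o₂)), hF o₁, hjj]
    have hr : 0 < t o₁ / t o₂ := div_pos (ht o₁) (ht o₂)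
    match o₁, o₂, hne, hprop with
    | none, none, hne, _ => exact hne rfl
    | none, some x, _, hprop =>
        exact oc_not_prop_union hab hac hbc hr hprop
    | some x, none, _, hprop =>
        have hprop' : oc_ind {z | x ≤ z}
            = (t (some x) / t none) • oc_ind ({y | a ≤ y} ∪ {y | b ≤ y}) := hprop
        refine oc_not_prop_union hab hac hbc (x := x) (r := (t (some x) / t none)⁻¹)
          (inv_pos.mpr hr) ?_
        rw [hprop', smul_smul, inv_mul_cancel₀ (ne_of_gt hr), one_smul]
    | some x, some y, hne, hprop =>
        exact oc_not_prop_principal (fun h => hne (by rw [h])) hr hprop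
  · intro hno
    classical
    have huniq : ∀ ⦃a b c : P⦄, a ⋖ c → b ⋖ c → a = b := by
      intro a b c h1 h2
      by_contra hne
      exact hno ⟨a, b, c, hne, h1, h2⟩
    have σ : Fin p ≃ P := (Fintype.equivFinOfCardEq hp).symm
    refine ⟨fun i => oc_ind {z | σ i ≤ z}, ?_, ?_⟩
    · exact oc_principal_li.comp σ σ.injective
    · ext f
      constructor
      · rintro ⟨c, hc, rfl⟩
        constructor
        · intro x
          rw [Finset.sum_apply]
          exact Finset.sum_nonneg fun i _ => by
            rw [Pi.smul_apply, smul_eq_mul]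
            exact mul_nonneg (hc i) (oc_ind_nonneg _ _)
        · intro x y hxy
          rw [Finset.sum_apply, Finset.sum_apply]
          refine Finset.sum_le_sum fun i _ => ?_
          rw [Pi.smul_apply, Pi.smul_apply, smul_eq_mul, smul_eq_mul]
          refine mul_le_mul_of_nonneg_left ?_ (hc i)
          dsimp only
          by_cases h : σ i ≤ x
          · rw [oc_ind_of_mem (S := {z | σ i ≤ z}) h,
              oc_ind_of_mem (S := {z | σ i ≤ z}) (h.trans hxy)]
          · rw [oc_ind_of_notMem (S := {z | σ i ≤ z}) h]; exact oc_ind_nonneg _ _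
      · intro hf
        refine ⟨fun i => oc_d f (σ i), fun i => oc_d_nonneg hf _, ?_⟩
        have h1 : (∑ i, oc_d f (σ i) • oc_ind {z | σ i ≤ z})
            = ∑ x : P, oc_d f x • oc_ind {z | x ≤ z} :=
          Equiv.sum_comp σ (fun x => oc_d f x • oc_ind {z | x ≤ z})
        rw [h1]
        funext y
        rw [oc_sum_eval]
        exact (oc_repr huniq hf y).symm
end

section
/- Let P be a finite partially ordered set whose Hasse diagram contains no collider, i.e., there do not exist elements a, b, c of P with a ≠ b, a ⋖ c, and b ⋖ c. Then every nonempty connected upper set U of P is principal: there exists u ∈ U such that U = {y ∈ P : u ≤ y}. -/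
/-! Take a minimal element `u` of `U`. Without colliders, an element `c` has at most one lower
cover `a`, so everything strictly below `c` lies below `a`. Hence walking along Hasse edges
inside `U` never leaves the principal filter of `u`: going up is harmless, and going down from
`x ≥ u` to the lower cover of `x` stays above `u` unless `x = u`, which minimality forbids.
Connectedness of `U` then puts all of `U` above `u`. -/

/-- The Hasse graph of a poset: an edge between `x` and `y` iff one covers the other. -/
def hasseGraph (P : Type*) [PartialOrder P] : SimpleGraph P where
  Adj x y := x ⋖ y ∨ y ⋖ x
  symm := by
    constructor
    intro x y h
    exact h.symm
  loopless := by
    constructor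
    intro x h
    exact (h.elim id id).lt.ne rfl

theorem SimpleGraph.Reachable.mem_of_adj_closed {V : Type*} {G : SimpleGraph V} {S : Set V}
    (hS : ∀ ⦃x y⦄, G.Adj x y → x ∈ S → y ∈ S) {u v : V} (huv : G.Reachable u v) (hu : u ∈ S) :
    v ∈ S := by
  rw [SimpleGraph.reachable_iff_reflTransGen] at huv
  induction huv with
  | refl => exact hu
  | tail _ hxy ih => exact hS hxy ih

section NoCollider

variable {P : Type*} [PartialOrder P] [IsStronglyCoatomic P]

theorem le_of_lt_of_covBy (hnc : ∀ ⦃a b c : P⦄, a ⋖ c → b ⋖ c → a = b) {a b c : P}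
    (hbc : b < c) (hac : a ⋖ c) : b ≤ a := by
  obtain ⟨x, hbx, hxc⟩ := exists_le_covBy_of_lt hbc
  exact hnc hxc hac ▸ hbx

theorem le_of_hasseGraph_adj (hnc : ∀ ⦃a b c : P⦄, a ⋖ c → b ⋖ c → a = b) {U : Set P}
    {u x y : P} (hu : Minimal (· ∈ U) u) (hy : y ∈ U) (hux : u ≤ x)
    (hxy : (hasseGraph P).Adj x y) : u ≤ y := by
  rcases hxy with hxy | hyx
  · exact hux.trans hxy.le
  · rcases hux.eq_or_lt with rfl | hux
    · exact absurd hyx.lt (hu.not_lt hy)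
    · exact le_of_lt_of_covBy hnc hux hyx

end NoCollider

/-- in a finite poset with no colliders in its Hasse diagram, every nonempty
connected upper set is principal. -/
theorem connected_upperSet_principal_of_no_collider
    (P : Type*) [Fintype P] [PartialOrder P]
    (hnc : ¬ ∃ a b c : P, a ≠ b ∧ a ⋖ c ∧ b ⋖ c)
    (U : Set P) (hne : U.Nonempty) (hup : IsUpperSet U)
    (hconn : ((hasseGraph P).induce U).Connected) :
    ∃ u ∈ U, U = {y : P | u ≤ y} := by
  have hnc' : ∀ ⦃a b c : P⦄, a ⋖ c → b ⋖ c → a = b := fun a b c hac hbc =>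
    by_contra fun hab => hnc ⟨a, b, c, hab, hac, hbc⟩
  obtain ⟨u, hu⟩ := U.toFinite.exists_minimal hne
  have hle : ∀ y ∈ U, u ≤ y := fun y hy =>
    (hconn ⟨u, hu.prop⟩ ⟨y, hy⟩).mem_of_adj_closed (S := {x : U | u ≤ x})
      (fun _ y hxy hx => le_of_hasseGraph_adj hnc' hu y.2 hx hxy) (le_refl u)
  exact ⟨u, hu.prop, Set.Subset.antisymm hle (hup.Ici_subset hu.prop)⟩
end

section
/- Let P be a finite partially ordered set. A vector v ∈ ℝ^P spans an extreme ray of the order cone C(P) if and only if v = c·𝟙_U for some real number c > 0 and some nonempty connected upper set U of P, where 𝟙_U(x) = 1 if x ∈ U and 0 otherwise. -/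
/-- `v` spans an extreme ray of the convex cone `C`. -/
def SpansExtremeRay {E : Type*} [AddCommMonoid E] [SMul ℝ E] (C : Set E) (v : E) : Prop :=
  v ∈ C ∧ v ≠ 0 ∧ ∀ x y, x ∈ C → y ∈ C → v = x + y →
    (∃ α : ℝ, 0 ≤ α ∧ x = α • v) ∧ (∃ β : ℝ, 0 ≤ β ∧ y = β • v)

/-!
If `v` spans an extreme ray, let `U` be its support, an upper set, and `c` the minimum of `v`
on `U`. Then `v = c • 𝟙_U + (v - c • 𝟙_U)` is a decomposition inside the cone, so
`v = c • 𝟙_U`; and if `A` is a connected component of the Hasse graph on `U`, both `A` and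
`U \ A` are upper sets, so `c • 𝟙_U = c • 𝟙_A + c • 𝟙_{U \ A}` forces `A = U`.
Conversely, if `c • 𝟙_U = f + g` in the cone, monotonicity of `f` and `g` and constancy of their
sum on `U` make `f` constant along each Hasse edge in `U`, hence on `U` when `U` is connected,
and `f` vanishes off `U`.
-/

open Set

theorem SimpleGraph.Reachable.eq_of_forall_adj {V α : Type*} {G : SimpleGraph V} {f : V → α}
    (hf : ∀ ⦃p q⦄, G.Adj p q → f p = f q) {p q : V} (h : G.Reachable p q) : f p = f q := by
  obtain ⟨w⟩ := h
  induction w with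
  | nil => rfl
  | cons hadj _ ih => exact (hf hadj).trans ih

theorem SpansExtremeRay.eq_of_sub_mem {ι : Type*} {C : Set (ι → ℝ)} {v x : ι → ℝ}
    (h : SpansExtremeRay C v) (hx : x ∈ C) (hvx : v - x ∈ C) {p : ι} (hp : x p = v p)
    (hp0 : v p ≠ 0) : x = v := by
  obtain ⟨⟨α, -, rfl⟩, -⟩ := h.2.2 x (v - x) hx hvx (add_sub_cancel x v).symm
  have hα : α = 1 := (mul_eq_right₀ hp0).mp hp
  rw [hα, one_smul]

section OrderCone

variable {P : Type*} [PartialOrder P]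

theorem smul_indicator_one_mem_orderCone {c : ℝ} (hc : 0 ≤ c) {U : Set P} (hU : IsUpperSet U) :
    c • U.indicator 1 ∈ orderCone P := by
  have hnonneg : ∀ p, 0 ≤ U.indicator (1 : P → ℝ) p := indicator_nonneg fun _ _ => zero_le_one
  refine ⟨fun p => mul_nonneg hc (hnonneg p), fun p q hpq => mul_le_mul_of_nonneg_left ?_ hc⟩
  by_cases hp : p ∈ U
  · simp [hp, hU hpq hp]
  · simpa [hp] using hnonneg q

theorem sub_smul_indicator_one_mem_orderCone {v : P → ℝ} (hv : v ∈ orderCone P) {U : Set P}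
    (hU : IsUpperSet U) (hout : ∀ p ∉ U, v p = 0) {c : ℝ} (hle : ∀ p ∈ U, c ≤ v p) :
    v - c • U.indicator 1 ∈ orderCone P := by
  have hin : ∀ p ∈ U, (v - c • U.indicator (1 : P → ℝ)) p = v p - c := fun p hp => by simp [hp]
  have hnotin : ∀ p ∉ U, (v - c • U.indicator (1 : P → ℝ)) p = 0 := fun p hp => by
    simp [hp, hout p hp]
  have hnonneg : ∀ p, 0 ≤ (v - c • U.indicator (1 : P → ℝ)) p := fun p => by
    by_cases hp : p ∈ U
    · rw [hin p hp]
      exact sub_nonneg.mpr (hle p hp)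
    · rw [hnotin p hp]
  refine ⟨hnonneg, fun p q hpq => ?_⟩
  by_cases hp : p ∈ U
  · rw [hin p hp, hin q (hU hpq hp)]
    linarith [hv.2 hpq]
  · rw [hnotin p hp]
    exact hnonneg q

theorem reachable_induce_hasseGraph_of_le [Finite P] {U : Set P} (hU : IsUpperSet U) {a b : P}
    (ha : a ∈ U) (hab : a ≤ b) :
    ((hasseGraph P).induce U).Reachable ⟨a, ha⟩ ⟨b, hU hab ha⟩ := by
  induction a using WellFoundedGT.induction with
  | _ a ih =>
    obtain rfl | hlt := hab.eq_or_lt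
    · rfl
    obtain ⟨z, haz, hzb⟩ := exists_covBy_le_of_lt hlt
    have hadj : ((hasseGraph P).induce U).Adj ⟨a, ha⟩ ⟨z, hU haz.le ha⟩ := Or.inl haz
    exact hadj.reachable.trans (ih z haz.lt _ hzb)

theorem eq_smul_indicator_of_add_eq {U : Set P} (hconn : ((hasseGraph P).induce U).Preconnected)
    {f g : P → ℝ} (hf : f ∈ orderCone P) (hg : g ∈ orderCone P) {c : ℝ}
    (hfg : f + g = c • U.indicator 1) {u : P} (hu : u ∈ U) : f = f u • U.indicator 1 := by
  have hsum : ∀ p, f p + g p = c • U.indicator 1 p := fun p => congrFun hfg p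
  funext p
  by_cases hp : p ∈ U
  · have hle : ∀ a b : U, a.1 ≤ b.1 → f a = f b := fun a b hab => by
      have ha := hsum a
      have hb := hsum b
      simp only [indicator_of_mem a.2, indicator_of_mem b.2, Pi.one_apply, smul_eq_mul,
        mul_one] at ha hb
      linarith [hf.2 hab, hg.2 hab]
    have hadj : ∀ ⦃a b : U⦄, ((hasseGraph P).induce U).Adj a b → f a = f b := by
      rintro a b (hab | hba)
      · exact hle a b hab.le
      · exact (hle b a hba.le).symm
    simpa [hp] using ((hconn ⟨u, hu⟩ ⟨p, hp⟩).eq_of_forall_adj hadj).symm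
  · have hp0 := hsum p
    simp only [indicator_of_notMem hp, smul_zero] at hp0
    rw [Pi.smul_apply, indicator_of_notMem hp, smul_zero]
    linarith [hf.1 p, hg.1 p]

theorem spansExtremeRay_smul_indicator {c : ℝ} (hc : 0 < c) {U : Set P} (hne : U.Nonempty)
    (hU : IsUpperSet U) (hconn : ((hasseGraph P).induce U).Preconnected) :
    SpansExtremeRay (orderCone P) (c • U.indicator 1) := by
  obtain ⟨u, hu⟩ := hne
  have hsummand : ∀ f g, f ∈ orderCone P → g ∈ orderCone P → c • U.indicator 1 = f + g →
      ∃ α : ℝ, 0 ≤ α ∧ f = α • c • U.indicator 1 := fun f g hf hg hfg =>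
    ⟨f u / c, div_nonneg (hf.1 u) hc.le, by
      rw [smul_smul, div_mul_cancel₀ _ hc.ne']
      exact eq_smul_indicator_of_add_eq hconn hf hg hfg.symm hu⟩
  refine ⟨smul_indicator_one_mem_orderCone hc.le hU, fun h => ?_, fun x y hx hy hxy =>
    ⟨hsummand x y hx hy hxy, hsummand y x hy hx (hxy.trans (add_comm x y))⟩⟩
  simpa [hu, hc.ne'] using congrFun h u

theorem SpansExtremeRay.exists_eq_smul_indicator [Finite P] {v : P → ℝ}
    (h : SpansExtremeRay (orderCone P) v) :
    ∃ c : ℝ, 0 < c ∧ ∃ U : Set P, U.Nonempty ∧ IsUpperSet U ∧ v = c • U.indicator 1 := by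
  let U : Set P := {p | 0 < v p}
  have hout : ∀ p ∉ U, v p = 0 := fun p hp => (not_lt.mp hp).antisymm (h.1.1 p)
  have hne : U.Nonempty := by
    by_contra hU
    exact h.2.1 (funext fun p => hout p fun hp => hU ⟨p, hp⟩)
  have hU : IsUpperSet U := fun p q hpq hp => hp.trans_le (h.1.2 hpq)
  obtain ⟨u, hu, hmin⟩ := U.exists_min_image v U.toFinite hne
  refine ⟨v u, hu, U, hne, hU, (h.eq_of_sub_mem (smul_indicator_one_mem_orderCone hu.le hU)
    (sub_smul_indicator_one_mem_orderCone h.1 hU hout hmin) (p := u) ?_ hu.ne').symm⟩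
  simp [show u ∈ U from hu]

theorem SpansExtremeRay.connected_induce_hasseGraph [Finite P] {c : ℝ} (hc : 0 < c) {U : Set P}
    (hne : U.Nonempty) (hU : IsUpperSet U)
    (h : SpansExtremeRay (orderCone P) (c • U.indicator 1)) :
    ((hasseGraph P).induce U).Connected := by
  have : Nonempty U := hne.to_subtype
  refine ⟨fun ⟨p, hp⟩ ⟨q, hq⟩ => ?_⟩
  let A : Set P := {r | ∃ hr : r ∈ U, ((hasseGraph P).induce U).Reachable ⟨p, hp⟩ ⟨r, hr⟩}
  have hAU : A ⊆ U := fun r hr => hr.1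
  have hpA : p ∈ A := ⟨hp, .refl _⟩
  have hA : IsUpperSet A := fun r s hrs ⟨hr, hpr⟩ =>
    ⟨hU hrs hr, hpr.trans (reachable_induce_hasseGraph_of_le hU hr hrs)⟩
  have hUA : IsUpperSet (U \ A) := fun r s hrs ⟨hr, hrA⟩ =>
    ⟨hU hrs hr, fun ⟨_, hps⟩ =>
      hrA ⟨hr, hps.trans (reachable_induce_hasseGraph_of_le hU hr hrs).symm⟩⟩
  have hsub : c • U.indicator 1 - c • A.indicator 1 = c • (U \ A).indicator (1 : P → ℝ) := by
    rw [indicator_sdiff hAU, smul_sub]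
  have hAeq := h.eq_of_sub_mem (smul_indicator_one_mem_orderCone hc.le hA)
    (hsub ▸ smul_indicator_one_mem_orderCone hc.le hUA) (p := p) (by simp [hp, hpA])
    (by simp [hp, hc.ne'])
  have hqA : q ∈ A := by
    by_contra hqA
    exact hc.ne (by simpa [hq, hqA] using congrFun hAeq q)
  exact hqA.2

end OrderCone

/-- `v` spans an extreme ray of the order cone `C(P)` iff `v` is a positive
multiple of the indicator function of a nonempty connected upper set of `P`. -/
theorem spansExtremeRay_orderCone_iff
    (P : Type*) [Fintype P] [PartialOrder P] (v : P → ℝ) :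
    SpansExtremeRay (orderCone P) v ↔
      ∃ c : ℝ, 0 < c ∧ ∃ U : Set P, U.Nonempty ∧ IsUpperSet U ∧
        ((hasseGraph P).induce U).Connected ∧
        v = c • U.indicator (fun _ => (1 : ℝ)) := by
  constructor
  · intro h
    obtain ⟨c, hc, U, hne, hU, rfl⟩ := h.exists_eq_smul_indicator
    exact ⟨c, hc, U, hne, hU, h.connected_induce_hasseGraph hc hne hU, rfl⟩
  · rintro ⟨c, hc, U, hne, hU, hconn, rfl⟩
    exact spansExtremeRay_smul_indicator hc hne hU hconn.preconnected
end

section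
/- Let p₁, p₂ be positive integers and equip the product {1,…,p₁} × {1,…,p₂} of two chains with the product order, where (x₁,x₂) ≤ (y₁,y₂) if and only if x₁ ≤ y₁ and x₂ ≤ y₂. The number of nonempty antichains of this poset equals the binomial coefficient (p₁ + p₂ choose p₁) minus 1. -/
/-!
An antichain of a product of two chains is determined by its projections `s` and `t`: first
coordinates increase exactly where second coordinates decrease, so it pairs the `i`-th smallest
element of `s` with the `i`-th largest element of `t`. Antichains therefore correspond to pairs
`(s, t)` with `#s = #t`, and the empty antichain accounts for the `- 1`.
-/

open Finset

variable {α β : Type*}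

namespace IsAntichain

variable {s : Set (α × β)} {x y : α × β}

theorem injOn_fst [Preorder α] [LinearOrder β] (hs : IsAntichain (· ≤ ·) s) :
    s.InjOn Prod.fst := by
  intro x hx y hy h
  by_contra hne
  rcases le_total x.2 y.2 with h₂ | h₂
  · exact hs hx hy hne ⟨h.le, h₂⟩
  · exact hs hy hx (Ne.symm hne) ⟨h.ge, h₂⟩

theorem injOn_snd [LinearOrder α] [Preorder β] (hs : IsAntichain (· ≤ ·) s) :
    s.InjOn Prod.snd := by
  intro x hx y hy h
  by_contra hne
  rcases le_total x.1 y.1 with h₁ | h₁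
  · exact hs hx hy hne ⟨h₁, h.le⟩
  · exact hs hy hx (Ne.symm hne) ⟨h₁, h.ge⟩

theorem snd_lt_of_fst_lt [Preorder α] [LinearOrder β] (hs : IsAntichain (· ≤ ·) s)
    (hx : x ∈ s) (hy : y ∈ s) (h : x.1 < y.1) : y.2 < x.2 := by
  by_contra! h₂
  exact hs hx hy (fun e => h.ne (congrArg Prod.fst e)) ⟨h.le, h₂⟩

theorem fst_lt_of_snd_lt [LinearOrder α] [Preorder β] (hs : IsAntichain (· ≤ ·) s)
    (hx : x ∈ s) (hy : y ∈ s) (h : x.2 < y.2) : y.1 < x.1 := by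
  by_contra! h₁
  exact hs hx hy (fun e => h.ne (congrArg Prod.snd e)) ⟨h₁, h.le⟩

end IsAntichain

theorem Finset.injOn_card_filter_lt [LinearOrder β] (t : Finset β) :
    Set.InjOn (fun b => #(t.filter (b < ·))) t := by
  refine StrictAntiOn.injOn fun b _ b' hb' hlt => card_lt_card ?_
  refine (ssubset_iff_of_subset fun c hc => ?_).2 ⟨b', ?_, ?_⟩
  · exact mem_filter.2 ⟨(mem_filter.1 hc).1, hlt.trans (mem_filter.1 hc).2⟩
  · exact mem_filter.2 ⟨hb', hlt⟩
  · simp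

section LinearOrder

variable [LinearOrder α] [LinearOrder β] {A B : Finset (α × β)}

theorem IsAntichain.card_image_fst_eq_card_image_snd
    (hA : IsAntichain (· ≤ ·) (A : Set (α × β))) : #(A.image Prod.fst) = #(A.image Prod.snd) := by
  rw [card_image_of_injOn hA.injOn_fst, card_image_of_injOn hA.injOn_snd]

theorem IsAntichain.card_filter_fst_lt_eq (hA : IsAntichain (· ≤ ·) (A : Set (α × β)))
    {x : α × β} (hx : x ∈ A) :
    #((A.image Prod.fst).filter (· < x.1)) = #((A.image Prod.snd).filter (x.2 < ·)) := by
  have hiff : ∀ z ∈ A, z.1 < x.1 ↔ x.2 < z.2 := fun z hz =>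
    ⟨hA.snd_lt_of_fst_lt hz hx, hA.fst_lt_of_snd_lt hx hz⟩
  rw [filter_image, filter_image, filter_congr hiff,
    card_image_of_injOn (hA.injOn_fst.mono (coe_subset.2 (filter_subset _ _))),
    card_image_of_injOn (hA.injOn_snd.mono (coe_subset.2 (filter_subset _ _)))]

theorem IsAntichain.prod_mem_iff (hA : IsAntichain (· ≤ ·) (A : Set (α × β))) {x : α × β} :
    x ∈ A ↔ x.1 ∈ A.image Prod.fst ∧ x.2 ∈ A.image Prod.snd ∧
      #((A.image Prod.fst).filter (· < x.1)) = #((A.image Prod.snd).filter (x.2 < ·)) := by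
  refine ⟨fun hx => ⟨mem_image_of_mem _ hx, mem_image_of_mem _ hx, hA.card_filter_fst_lt_eq hx⟩,
    fun ⟨h₁, h₂, hrank⟩ => ?_⟩
  obtain ⟨y, hy, hy₁⟩ := mem_image.1 h₁
  have hy₂ : y.2 = x.2 := (A.image Prod.snd).injOn_card_filter_lt (mem_image_of_mem _ hy) h₂ <| by
    simp only [← hA.card_filter_fst_lt_eq hy, hy₁, hrank]
  exact Prod.ext hy₁.symm hy₂.symm ▸ hy

theorem IsAntichain.eq_of_image_fst_eq_of_image_snd_eq
    (hA : IsAntichain (· ≤ ·) (A : Set (α × β))) (hB : IsAntichain (· ≤ ·) (B : Set (α × β)))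
    (h₁ : A.image Prod.fst = B.image Prod.fst)
    (h₂ : A.image Prod.snd = B.image Prod.snd) : A = B := by
  ext x
  rw [hA.prod_mem_iff, hB.prod_mem_iff, h₁, h₂]

namespace Finset

noncomputable def antichainOfCardEq (s : Finset α) (t : Finset β) (h : #s = #t) :
    Finset (α × β) :=
  univ.image fun i : Fin #s => (s.orderEmbOfFin rfl i, t.orderEmbOfFin h.symm i.rev)

variable (s : Finset α) (t : Finset β) (h : #s = #t)

theorem image_fst_antichainOfCardEq : (antichainOfCardEq s t h).image Prod.fst = s := by
  rw [antichainOfCardEq, image_image]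
  exact s.image_orderEmbOfFin_univ rfl

theorem image_snd_antichainOfCardEq : (antichainOfCardEq s t h).image Prod.snd = t := by
  rw [antichainOfCardEq, image_image]
  change univ.image (t.orderEmbOfFin h.symm ∘ Fin.rev) = t
  rw [← image_image, image_univ_of_surjective Fin.rev_surjective,
    t.image_orderEmbOfFin_univ h.symm]

theorem isAntichain_antichainOfCardEq :
    IsAntichain (· ≤ ·) (antichainOfCardEq s t h : Set (α × β)) := by
  simp only [antichainOfCardEq, coe_image, coe_univ, Set.image_univ]
  rintro _ ⟨i, rfl⟩ _ ⟨j, rfl⟩ hne ⟨h₁, h₂⟩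
  have hij : i ≤ j := (s.orderEmbOfFin rfl).le_iff_le.1 h₁
  have hji : j ≤ i := Fin.rev_le_rev.1 ((t.orderEmbOfFin h.symm).le_iff_le.1 h₂)
  exact hne (by rw [le_antisymm hij hji])

end Finset

noncomputable def antichainEquivPairsCardEq :
    {A : Finset (α × β) // IsAntichain (· ≤ ·) (A : Set (α × β))} ≃
      {q : Finset α × Finset β // #q.1 = #q.2} where
  toFun A := ⟨(A.1.image Prod.fst, A.1.image Prod.snd), A.2.card_image_fst_eq_card_image_snd⟩
  invFun q := ⟨antichainOfCardEq q.1.1 q.1.2 q.2, isAntichain_antichainOfCardEq _ _ q.2⟩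
  left_inv := fun ⟨_, hA⟩ => Subtype.ext <|
    (isAntichain_antichainOfCardEq _ _ hA.card_image_fst_eq_card_image_snd
      ).eq_of_image_fst_eq_of_image_snd_eq hA
      (image_fst_antichainOfCardEq _ _ _) (image_snd_antichainOfCardEq _ _ _)
  right_inv q := Subtype.ext <| Prod.ext (image_fst_antichainOfCardEq _ _ q.2)
    (image_snd_antichainOfCardEq _ _ q.2)

end LinearOrder

/-- Via `(s, t) ↦ sᶜ ⊕ t`, the pairs with `#s = #t` are the `card α`-subsets of `α ⊕ β`. -/
theorem card_finsetPairs_card_eq [Fintype α] [Fintype β] :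
    Nat.card {q : Finset α × Finset β // #q.1 = #q.2} =
      (Fintype.card α + Fintype.card β).choose (Fintype.card α) := by
  classical
  let e : Finset α × Finset β ≃ Finset (α ⊕ β) :=
    ((compl_involutive.toPerm _).prodCongr (Equiv.refl _)).trans sumEquiv.symm.toEquiv
  rw [Nat.card_congr (e.subtypeEquiv (q := fun u => #u = Fintype.card α) fun q => ?_),
    Nat.card_eq_fintype_card, Fintype.card_finset_len, Fintype.card_sum]
  change #q.1 = #q.2 ↔ #(q.1ᶜ.disjSum q.2) = Fintype.card α
  have := card_le_univ q.1
  rw [card_disjSum, card_compl]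
  omega

theorem Finset.card_subtype_nonempty_and {P : Finset α → Prop} (h : P ∅) :
    Nat.card {s : Finset α // s.Nonempty ∧ P s} = Nat.card {s : Finset α // P s} - 1 := by
  have : {s : Finset α | s.Nonempty ∧ P s} = {s | P s} \ {∅} := by
    ext s
    simp [nonempty_iff_ne_empty, and_comm]
  have hcard := Set.ncard_sdiff_singleton_of_mem (s := {s : Finset α | P s}) h
  rw [← this, ← Nat.card_coe_set_eq, ← Nat.card_coe_set_eq] at hcard
  exact hcard

theorem card_nonempty_antichains_product_of_chains_general (p₁ p₂ : ℕ) :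
    Nat.card {s : Finset (Fin p₁ × Fin p₂) //
        s.Nonempty ∧ IsAntichain (· ≤ ·) (s : Set (Fin p₁ × Fin p₂))} =
      Nat.choose (p₁ + p₂) p₁ - 1 := by
  rw [card_subtype_nonempty_and (by simp), Nat.card_congr antichainEquivPairsCardEq,
    card_finsetPairs_card_eq, Fintype.card_fin, Fintype.card_fin]

/-- the number of nonempty antichains of the product of two chains
`{1,…,p₁} × {1,…,p₂}` (with the componentwise order) is `(p₁ + p₂ choose p₁) - 1`. -/
theorem card_nonempty_antichains_product_of_chains (p₁ p₂ : ℕ) (h₁ : 0 < p₁) (h₂ : 0 < p₂) :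
    Nat.card {s : Finset (Fin p₁ × Fin p₂) //
        s.Nonempty ∧ IsAntichain (· ≤ ·) (s : Set (Fin p₁ × Fin p₂))} =
      Nat.choose (p₁ + p₂) p₁ - 1 :=
  card_nonempty_antichains_product_of_chains_general p₁ p₂
end

section
/- Let P₁ and P₂ be finite nonempty partially ordered sets and equip P₁ × P₂ with the product order. Then the following are equivalent: (i) every function T : P₁ × P₂ → ℝ that is nonnegative and monotone with respect to the product order can be written as T(x,y) = ∑_{i=1}^r a_i(x)·b_i(y) for some r ∈ ℕ, a_1,…,a_r ∈ C(P₁), and b_1,…,b_r ∈ C(P₂); (ii) at least one of P₁, P₂ is an antichain, i.e., has no two distinct comparable elements. -/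
open scoped Classical


lemma exists_lt_of_not_antichain {P : Type*} [PartialOrder P]
    (h : ¬ IsAntichain (· ≤ ·) (Set.univ : Set P)) : ∃ p q : P, p < q := by
  simp only [IsAntichain, Set.Pairwise, Set.mem_univ, true_implies, Pi.compl_apply,
    compl_iff_not, not_forall, not_not] at h
  obtain ⟨a, b, hne, hle⟩ := h
  exact ⟨a, b, lt_of_le_of_ne hle hne⟩

lemma factor_left {P₁ P₂ : Type*} [Fintype P₁] [PartialOrder P₁] [PartialOrder P₂]
    (hac : IsAntichain (· ≤ ·) (Set.univ : Set P₁))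
    (T : P₁ × P₂ → ℝ) (hT : (∀ z, 0 ≤ T z) ∧ Monotone T) :
    ∃ (r : ℕ) (a : Fin r → P₁ → ℝ) (b : Fin r → P₂ → ℝ),
      (∀ i, a i ∈ orderCone P₁) ∧ (∀ i, b i ∈ orderCone P₂) ∧
      ∀ x y, T (x, y) = ∑ i, a i x * b i y := by
  let e := (Fintype.equivFin P₁).symm
  refine ⟨Fintype.card P₁, fun i x => if x = e i then 1 else 0, fun i y => T (e i, y),
    ?_, ?_, ?_⟩
  · intro i
    refine ⟨fun x => by dsimp only; split <;> norm_num, fun x y hxy => ?_⟩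
    have hxy' : x = y := hac.eq (Set.mem_univ x) (Set.mem_univ y) hxy
    subst hxy'; exact le_rfl
  · intro i
    exact ⟨fun y => hT.1 _, fun y y' hy => hT.2 (Prod.mk_le_mk.2 ⟨le_rfl, hy⟩)⟩
  · intro x y
    calc T (x, y) = ∑ i, (if i = e.symm x then T (x, y) else 0) := by
          rw [Finset.sum_ite_eq' Finset.univ]; simp
      _ = ∑ i, (if x = e i then (1:ℝ) else 0) * T (e i, y) := by
          apply Finset.sum_congr rfl
          intro i _
          by_cases h : i = e.symm x
          · subst h; simp
          · have hx : x ≠ e i := fun hx => h (by rw [hx]; simp)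
            simp [h, hx]

lemma factor_right {P₁ P₂ : Type*} [PartialOrder P₁] [Fintype P₂] [PartialOrder P₂]
    (hac : IsAntichain (· ≤ ·) (Set.univ : Set P₂))
    (T : P₁ × P₂ → ℝ) (hT : (∀ z, 0 ≤ T z) ∧ Monotone T) :
    ∃ (r : ℕ) (a : Fin r → P₁ → ℝ) (b : Fin r → P₂ → ℝ),
      (∀ i, a i ∈ orderCone P₁) ∧ (∀ i, b i ∈ orderCone P₂) ∧
      ∀ x y, T (x, y) = ∑ i, a i x * b i y := by
  let e := (Fintype.equivFin P₂).symm
  refine ⟨Fintype.card P₂, fun i x => T (x, e i), fun i y => if y = e i then 1 else 0,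
    ?_, ?_, ?_⟩
  · intro i
    exact ⟨fun x => hT.1 _, fun x x' hx => hT.2 (Prod.mk_le_mk.2 ⟨hx, le_rfl⟩)⟩
  · intro i
    refine ⟨fun y => by dsimp only; split <;> norm_num, fun x y hxy => ?_⟩
    have hxy' : x = y := hac.eq (Set.mem_univ x) (Set.mem_univ y) hxy
    subst hxy'; exact le_rfl
  · intro x y
    calc T (x, y) = ∑ i, (if i = e.symm y then T (x, y) else 0) := by
          rw [Finset.sum_ite_eq' Finset.univ]; simp
      _ = ∑ i, T (x, e i) * (if y = e i then (1:ℝ) else 0) := by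
          apply Finset.sum_congr rfl
          intro i _
          by_cases h : i = e.symm y
          · subst h; simp
          · have hy : y ≠ e i := fun hy => h (by rw [hy]; simp)
            simp [h, hy]

/-- every nonnegative monotone function on `P₁ × P₂` (product order) has a
finite ND factorization iff at least one of `P₁`, `P₂` is an antichain. -/
theorem every_monotone_has_ND_factorization_iff_antichain
    (P₁ P₂ : Type*) [Fintype P₁] [Fintype P₂] [PartialOrder P₁] [PartialOrder P₂]
    [Nonempty P₁] [Nonempty P₂] :
    (∀ T : P₁ × P₂ → ℝ, ((∀ z, 0 ≤ T z) ∧ Monotone T) →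
      ∃ (r : ℕ) (a : Fin r → P₁ → ℝ) (b : Fin r → P₂ → ℝ),
        (∀ i, a i ∈ orderCone P₁) ∧ (∀ i, b i ∈ orderCone P₂) ∧
        ∀ x y, T (x, y) = ∑ i, a i x * b i y)
    ↔ (IsAntichain (· ≤ ·) (Set.univ : Set P₁) ∨ IsAntichain (· ≤ ·) (Set.univ : Set P₂)) := by
  constructor
  · intro h
    by_contra hnot
    push_neg at hnot
    obtain ⟨h1, h2⟩ := hnot
    obtain ⟨p₁, q₁, hlt1⟩ := exists_lt_of_not_antichain h1
    obtain ⟨p₂, q₂, hlt2⟩ := exists_lt_of_not_antichain h2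
    set T : P₁ × P₂ → ℝ := fun z => if q₁ ≤ z.1 ∨ q₂ ≤ z.2 then 1 else 0 with hTdef
    have hTpos : ∀ z, 0 ≤ T z := by
      intro z; simp only [hTdef]; split <;> norm_num
    have hTmono : Monotone T := by
      intro z w hzw
      by_cases hz : q₁ ≤ z.1 ∨ q₂ ≤ z.2
      · have hw : q₁ ≤ w.1 ∨ q₂ ≤ w.2 :=
          hz.imp (fun h' => h'.trans hzw.1) (fun h' => h'.trans hzw.2)
        simp [hTdef, hz, hw]
      · simp only [hTdef, hz, if_false]
        exact hTpos w
    obtain ⟨r, a, b, ha, hb, hfac⟩ := h T ⟨hTpos, hTmono⟩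
    have key : (0:ℝ) ≤ T (q₁, q₂) - T (q₁, p₂) - T (p₁, q₂) + T (p₁, p₂) := by
      rw [hfac q₁ q₂, hfac q₁ p₂, hfac p₁ q₂, hfac p₁ p₂,
        ← Finset.sum_sub_distrib, ← Finset.sum_sub_distrib, ← Finset.sum_add_distrib]
      apply Finset.sum_nonneg
      intro i _
      have h1' : a i p₁ ≤ a i q₁ := (ha i).2 hlt1.le
      have h2' : b i p₂ ≤ b i q₂ := (hb i).2 hlt2.le
      nlinarith [mul_nonneg (sub_nonneg.2 h1') (sub_nonneg.2 h2')]
    have e1 : T (q₁, q₂) = 1 := by simp [hTdef]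
    have e2 : T (q₁, p₂) = 1 := by simp [hTdef]
    have e3 : T (p₁, q₂) = 1 := by simp [hTdef]
    have e4 : T (p₁, p₂) = 0 := by simp [hTdef, hlt1.not_ge, hlt2.not_ge]
    rw [e1, e2, e3, e4] at key
    linarith
  · rintro (h | h) T hT
    · exact factor_left h T hT
    · exact factor_right h T hT
end

section
/- Let P be a finite partially ordered set whose Hasse diagram contains no collider, i.e., there do not exist elements a, b, c of P with a ≠ b, a ⋖ c, and b ⋖ c. Define matrices M, N ∈ ℝ^{P×P} by M_{a b} = 1 if b ≤ a and 0 otherwise, and N_{x y} = 1 if x = y, N_{x y} = −1 if y ⋖ x, and N_{x y} = 0 otherwise. Then M·N = N·M = I, i.e., N is the inverse matrix of M. -/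
open Classical in
/-- for a finite poset with no collider in its Hasse diagram, the matrix
`M` with `M a b = 1` iff `b ≤ a` (and `0` otherwise) has inverse `N` given by
`N x x = 1`, `N x y = -1` if `y ⋖ x`, and `0` otherwise. -/
theorem mobius_matrix_inverse
    (P : Type*) [Fintype P] [PartialOrder P]
    (hnc : ¬ ∃ a b c : P, a ≠ b ∧ a ⋖ c ∧ b ⋖ c)
    (M N : Matrix P P ℝ)
    (hM : ∀ a b : P, M a b = if b ≤ a then 1 else 0)
    (hN : ∀ x y : P, N x y = if x = y then 1 else if y ⋖ x then -1 else 0) :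
    M * N = 1 ∧ N * M = 1 := by
  have hNM : N * M = 1 := by
    ext a b
    rw [Matrix.mul_apply, Matrix.one_apply]
    have key : ∀ c, N a c * M c b =
        (if a = c then (if b ≤ c then (1:ℝ) else 0) else 0)
          + (if c ⋖ a ∧ b ≤ c then -1 else 0) := by
      intro c
      rw [hN, hM]
      by_cases h1 : a = c
      · subst h1
        have : ¬ (a ⋖ a ∧ b ≤ a) := fun h => absurd h.1.lt (lt_irrefl a)
        simp [this]
      · simp only [if_neg h1]
        by_cases h2 : c ⋖ a <;> by_cases h3 : b ≤ c <;>
          simp [h1, h2, h3]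
    rw [Finset.sum_congr rfl (fun c _ => key c), Finset.sum_add_distrib,
      Finset.sum_ite_eq Finset.univ a _, if_pos (Finset.mem_univ a)]
    have hcard : ∑ c, (if c ⋖ a ∧ b ≤ c then (-1:ℝ) else 0)
        = -((Finset.univ.filter (fun c => c ⋖ a ∧ b ≤ c)).card : ℝ) := by
      rw [Finset.sum_ite, Finset.sum_const, Finset.sum_const_zero]
      simp
    rw [hcard]
    by_cases hba : b ≤ a
    · rcases eq_or_lt_of_le hba with heq | hlt
      · subst heq
        have hempty : (Finset.univ.filter (fun c => c ⋖ b ∧ b ≤ c)) = ∅ := by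
          ext c
          simp only [Finset.mem_filter, Finset.mem_univ, true_and, Finset.notMem_empty,
            iff_false]
          rintro ⟨h1, h2⟩
          exact absurd (lt_of_le_of_lt h2 h1.lt) (lt_irrefl b)
        simp [hempty]
      · obtain ⟨y, hby, hya⟩ := exists_le_covBy_of_lt hlt
        have hsing : (Finset.univ.filter (fun c => c ⋖ a ∧ b ≤ c)) = {y} := by
          ext c
          simp only [Finset.mem_filter, Finset.mem_univ, true_and, Finset.mem_singleton]
          constructor
          · rintro ⟨h1, h2⟩
            by_contra hne
            exact hnc ⟨c, y, a, hne, h1, hya⟩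
          · rintro rfl
            exact ⟨hya, hby⟩
        have hne : a ≠ b := fun h => absurd hlt (h ▸ lt_irrefl a)
        simp [hsing, hba, hne]
    · have hempty : (Finset.univ.filter (fun c => c ⋖ a ∧ b ≤ c)) = ∅ := by
        ext c
        simp only [Finset.mem_filter, Finset.mem_univ, true_and, Finset.notMem_empty,
          iff_false]
        rintro ⟨h1, h2⟩
        exact hba (h2.trans h1.le)
      have hne : a ≠ b := fun h => hba (h ▸ le_refl a)
      simp [hempty, hba, hne]
  exact ⟨mul_eq_one_comm.mpr hNM, hNM⟩
end

section
/- Let P₁ and P₂ be finite partially ordered sets with p₁ and p₂ elements respectively, whose Hasse diagrams contain no colliders, and for j = 1, 2 let A_j : ℝ^{P_j} → ℝ^{P_j} be an invertible linear map with A_j(C(P_j)) equal to the nonnegative orthant of ℝ^{P_j}. Let T ∈ ℝ^{P₁×P₂} be a matrix admitting some factorization T(x,y) = ∑_{i=1}^m a_i(x)·b_i(y) with a_i ∈ C(P₁) and b_i ∈ C(P₂). Then for every r ∈ ℕ, T admits such a factorization with r terms from C(P₁) and C(P₂) if and only if the matrix S = A₁ T A₂ᵀ admits a factorization S(x,y)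 = ∑_{i=1}^r u_i(x)·w_i(y) with all u_i and w_i entrywise nonnegative. Consequently the ND rank of T equals the nonnegative rank of A₁ T A₂ᵀ. -/
/-- `T` admits an ND factorization with `r` terms. -/
def HasNDFact {P₁ P₂ : Type*} [PartialOrder P₁] [PartialOrder P₂]
    (T : P₁ → P₂ → ℝ) (r : ℕ) : Prop :=
  ∃ (a : Fin r → P₁ → ℝ) (b : Fin r → P₂ → ℝ),
    (∀ i, a i ∈ orderCone P₁) ∧ (∀ i, b i ∈ orderCone P₂) ∧
    ∀ x y, T x y = ∑ i, a i x * b i y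

/-- `S` admits a nonnegative factorization with `r` terms. -/
def HasNNFact {P₁ P₂ : Type*} (S : P₁ → P₂ → ℝ) (r : ℕ) : Prop :=
  ∃ (u : Fin r → P₁ → ℝ) (w : Fin r → P₂ → ℝ),
    (∀ i x, 0 ≤ u i x) ∧ (∀ i y, 0 ≤ w i y) ∧
    ∀ x y, S x y = ∑ i, u i x * w i y


lemma aux_fact {P₁ P₂ : Type*} {r : ℕ}
    (A₁ : (P₁ → ℝ) ≃ₗ[ℝ] (P₁ → ℝ)) (A₂ : (P₂ → ℝ) ≃ₗ[ℝ] (P₂ → ℝ))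
    (T : P₁ → P₂ → ℝ)
    (a : Fin r → P₁ → ℝ) (b : Fin r → P₂ → ℝ)
    (hfac : ∀ x y, T x y = ∑ i, a i x * b i y) :
    ∀ x y, A₁ (fun x' => A₂ (T x') y) x = ∑ i, (A₁ (a i) x) * (A₂ (b i) y) := by
  intro x y
  have hT2 : ∀ x', A₂ (T x') = ∑ i, a i x' • A₂ (b i) := by
    intro x'
    have h : T x' = ∑ i, a i x' • b i := by
      funext y; simp [hfac x' y, Finset.sum_apply]
    rw [h, map_sum]; simp
  have hG : (fun x' => A₂ (T x') y) = ∑ i, (A₂ (b i) y) • a i := by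
    funext x'
    rw [hT2 x']
    simp [Finset.sum_apply, mul_comm]
  rw [hG, map_sum]
  simp [Finset.sum_apply, mul_comm]

lemma aux_inj {P₁ P₂ : Type*}
    (A₁ : (P₁ → ℝ) ≃ₗ[ℝ] (P₁ → ℝ)) (A₂ : (P₂ → ℝ) ≃ₗ[ℝ] (P₂ → ℝ))
    (T T' : P₁ → P₂ → ℝ)
    (h : ∀ x y, A₁ (fun x' => A₂ (T x') y) x = A₁ (fun x' => A₂ (T' x') y) x) :
    T = T' := by
  have h1 : ∀ y, (fun x' => A₂ (T x') y) = fun x' => A₂ (T' x') y :=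
    fun y => A₁.injective (funext fun x => h x y)
  funext x y
  have h2 : A₂ (T x) = A₂ (T' x) := funext fun y => congrFun (h1 y) x
  exact congrFun (A₂.injective h2) y

/-- if the Hasse diagrams of `P₁` and `P₂` have no colliders and
`A_j` are invertible linear maps sending `C(P_j)` onto the nonnegative orthant, then a
finite-ND-rank matrix `T` has an ND factorization with `r` terms iff `A₁ T A₂ᵀ` has a
nonnegative factorization with `r` terms; hence the ND rank of `T` equals the nonnegative
rank of `A₁ T A₂ᵀ`. -/
theorem NDrank_eq_nonnegRank_of_simplicial
    (P₁ P₂ : Type*) [Fintype P₁] [Fintype P₂] [PartialOrder P₁] [PartialOrder P₂]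
    (hnc₁ : ¬ ∃ a b c : P₁, a ≠ b ∧ a ⋖ c ∧ b ⋖ c)
    (hnc₂ : ¬ ∃ a b c : P₂, a ≠ b ∧ a ⋖ c ∧ b ⋖ c)
    (A₁ : (P₁ → ℝ) ≃ₗ[ℝ] (P₁ → ℝ)) (A₂ : (P₂ → ℝ) ≃ₗ[ℝ] (P₂ → ℝ))
    (hA₁ : A₁ '' orderCone P₁ = {f : P₁ → ℝ | ∀ x, 0 ≤ f x})
    (hA₂ : A₂ '' orderCone P₂ = {f : P₂ → ℝ | ∀ y, 0 ≤ f y})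
    (T : P₁ → P₂ → ℝ) (m : ℕ) (hT : HasNDFact T m)
    (S : P₁ → P₂ → ℝ) (hS : ∀ x y, S x y = A₁ (fun x' => A₂ (T x') y) x) :
    (∀ r : ℕ, HasNDFact T r ↔ HasNNFact S r) ∧
      sInf {r : ℕ | HasNDFact T r} = sInf {r : ℕ | HasNNFact S r} := by
  have key : ∀ r : ℕ, HasNDFact T r ↔ HasNNFact S r := by
    intro r
    constructor
    · rintro ⟨a, b, ha, hb, hfac⟩
      refine ⟨fun i => A₁ (a i), fun i => A₂ (b i), ?_, ?_, ?_⟩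
      · intro i x
        have : A₁ (a i) ∈ ({f : P₁ → ℝ | ∀ x, 0 ≤ f x}) := by
          rw [← hA₁]; exact ⟨a i, ha i, rfl⟩
        exact this x
      · intro i y
        have : A₂ (b i) ∈ ({f : P₂ → ℝ | ∀ y, 0 ≤ f y}) := by
          rw [← hA₂]; exact ⟨b i, hb i, rfl⟩
        exact this y
      · intro x y
        rw [hS x y]
        exact aux_fact A₁ A₂ T a b hfac x y
    · rintro ⟨u, w, hu, hw, hfac⟩
      have hamem : ∀ i, A₁.symm (u i) ∈ orderCone P₁ := by
        intro i
        have : u i ∈ A₁ '' orderCone P₁ := by rw [hA₁]; exact hu i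
        obtain ⟨f, hf, hfe⟩ := this
        have : A₁.symm (u i) = f := by rw [← hfe]; simp
        rwa [this]
      have hbmem : ∀ i, A₂.symm (w i) ∈ orderCone P₂ := by
        intro i
        have : w i ∈ A₂ '' orderCone P₂ := by rw [hA₂]; exact hw i
        obtain ⟨f, hf, hfe⟩ := this
        have : A₂.symm (w i) = f := by rw [← hfe]; simp
        rwa [this]
      set a : Fin r → P₁ → ℝ := fun i => A₁.symm (u i) with ha
      set b : Fin r → P₂ → ℝ := fun i => A₂.symm (w i) with hb
      set T' : P₁ → P₂ → ℝ := fun x y => ∑ i, a i x * b i y with hT'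
      have hTT' : T = T' := by
        apply aux_inj A₁ A₂
        intro x y
        have h1 := aux_fact A₁ A₂ T' a b (fun x y => rfl) x y
        rw [h1, ← hS x y, hfac x y]
        apply Finset.sum_congr rfl
        intro i _
        simp [ha, hb]
      exact ⟨a, b, hamem, hbmem, fun x y => by rw [hTT']⟩
  refine ⟨key, ?_⟩
  have : {r : ℕ | HasNDFact T r} = {r : ℕ | HasNNFact S r} := Set.ext key
  rw [this]
end

section
/- Let T : {1,…,m} × {1,…,n} → ℝ be a matrix, where both index sets carry the usual total order, and let T̃ be the extension of T to {0,…,m} × {0,…,n} defined by T̃(i,j) = T(i,j) when i ≥ 1 and j ≥ 1, and T̃(i,j) = 0 when i = 0 or j = 0. Then T admits a factorization T(i,j) = ∑_{l=1}^r a_l(i)·b_l(j) for some r ∈ ℕ with each a_l : {1,…,m} → ℝ nonnegative and nondecreasing and each b_l : {1,…,n} → ℝ nonnegative and nondecreasing, if and only if T̃(i,j) − T̃(i−1,j) − T̃(i,j−1) + T̃(i−1,j−1) ≥ 0 for all 1 ≤ i ≤ m and 1 ≤ j ≤ n. -/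
/-- The extension `T̃` of a matrix `T : {1,…,m} × {1,…,n} → ℝ` (modeled on `Fin m × Fin n`)
to `{0,…,m} × {0,…,n}` (modeled on `ℕ × ℕ`), vanishing when `i = 0` or `j = 0`. -/
def extendZero (m n : ℕ) (T : Fin m → Fin n → ℝ) : ℕ → ℕ → ℝ := fun i j =>
  if h : 1 ≤ i ∧ i ≤ m ∧ 1 ≤ j ∧ j ≤ n then
    T ⟨i - 1, by omega⟩ ⟨j - 1, by omega⟩
  else 0

lemma extendZero_tele (m n : ℕ) (T : Fin m → Fin n → ℝ) (i j : ℕ) :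
    ∑ p ∈ Finset.range i, ∑ q ∈ Finset.range j,
      (extendZero m n T (p+1) (q+1) - extendZero m n T p (q+1)
        - extendZero m n T (p+1) q + extendZero m n T p q)
      = extendZero m n T i j := by
  have hrow : ∀ p, ∑ q ∈ Finset.range j,
      (extendZero m n T (p+1) (q+1) - extendZero m n T p (q+1)
        - extendZero m n T (p+1) q + extendZero m n T p q)
      = extendZero m n T (p+1) j - extendZero m n T p j := by
    intro p
    have h := Finset.sum_range_sub
      (fun q => extendZero m n T (p+1) q - extendZero m n T p q) j
    have h0 : extendZero m n T (p+1) 0 - extendZero m n T p 0 = 0 := by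
      simp [extendZero]
    rw [h0, sub_zero] at h
    rw [← h]
    exact Finset.sum_congr rfl (fun q _ => by ring)
  rw [Finset.sum_congr rfl (fun p _ => hrow p)]
  have h := Finset.sum_range_sub (fun p => extendZero m n T p j) i
  rw [h]
  simp [extendZero]

lemma sum_range_ite (N K : ℕ) (hK : K < N) (g : ℕ → ℝ) :
    ∑ x ∈ Finset.range N, (if x ≤ K then g x else 0) = ∑ x ∈ Finset.range (K+1), g x := by
  rw [← Finset.sum_subset (Finset.range_subset_range.mpr (by omega) :
      Finset.range (K+1) ⊆ Finset.range N)
      (fun x _ hx' => if_neg (by simp at hx'; omega))]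
  exact Finset.sum_congr rfl fun x hx => if_pos (by simp at hx; omega)

/-- a matrix indexed by two chains admits a factorization into sums of
products of nonnegative nondecreasing vectors iff all double differences of its
zero-extended cumulative array are nonnegative. -/
theorem ND_factorization_iff_double_differences_nonneg
    (m n : ℕ) (T : Fin m → Fin n → ℝ) :
    (∃ (r : ℕ) (a : Fin r → Fin m → ℝ) (b : Fin r → Fin n → ℝ),
      (∀ l, (∀ i, 0 ≤ a l i) ∧ Monotone (a l)) ∧
      (∀ l, (∀ j, 0 ≤ b l j) ∧ Monotone (b l)) ∧
      ∀ i j, T i j = ∑ l, a l i * b l j)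
    ↔ ∀ i ∈ Finset.Icc 1 m, ∀ j ∈ Finset.Icc 1 n,
        0 ≤ extendZero m n T i j - extendZero m n T (i - 1) j
            - extendZero m n T i (j - 1) + extendZero m n T (i - 1) (j - 1) := by
  constructor
  · rintro ⟨r, a, b, ha, hb, hT⟩ i hi j hj
    simp only [Finset.mem_Icc] at hi hj
    set A : Fin r → ℕ → ℝ := fun l i' =>
      if h : 1 ≤ i' ∧ i' ≤ m then a l ⟨i' - 1, by omega⟩ else 0 with hA
    set B : Fin r → ℕ → ℝ := fun l j' =>
      if h : 1 ≤ j' ∧ j' ≤ n then b l ⟨j' - 1, by omega⟩ else 0 with hB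
    have hE : ∀ i' j', extendZero m n T i' j' = ∑ l, A l i' * B l j' := by
      intro i' j'
      unfold extendZero
      split_ifs with h
      · rw [hT]
        refine Finset.sum_congr rfl fun l _ => ?_
        rw [hA, hB]; simp only
        rw [dif_pos ⟨h.1, h.2.1⟩, dif_pos ⟨h.2.2.1, h.2.2.2⟩]
      · by_cases h1 : 1 ≤ i' ∧ i' ≤ m
        · have h2 : ¬ (1 ≤ j' ∧ j' ≤ n) := by tauto
          symm; apply Finset.sum_eq_zero; intro l _
          rw [hB]; simp only; rw [dif_neg h2, mul_zero]
        · symm; apply Finset.sum_eq_zero; intro l _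
          rw [hA]; simp only; rw [dif_neg h1, zero_mul]
    have hAmono : ∀ l, 0 ≤ A l i - A l (i-1) := by
      intro l
      rw [hA]; simp only
      rw [dif_pos ⟨hi.1, hi.2⟩]
      by_cases h1 : 1 ≤ i - 1
      · rw [dif_pos ⟨h1, by omega⟩]
        have := (ha l).2 (show (⟨i-1-1, by omega⟩ : Fin m) ≤ ⟨i-1, by omega⟩ from
          Fin.mk_le_mk.mpr (by omega))
        linarith
      · rw [dif_neg (fun h => h1 h.1)]
        simpa using (ha l).1 _
    have hBmono : ∀ l, 0 ≤ B l j - B l (j-1) := by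
      intro l
      rw [hB]; simp only
      rw [dif_pos ⟨hj.1, hj.2⟩]
      by_cases h1 : 1 ≤ j - 1
      · rw [dif_pos ⟨h1, by omega⟩]
        have := (hb l).2 (show (⟨j-1-1, by omega⟩ : Fin n) ≤ ⟨j-1, by omega⟩ from
          Fin.mk_le_mk.mpr (by omega))
        linarith
      · rw [dif_neg (fun h => h1 h.1)]
        simpa using (hb l).1 _
    have key : extendZero m n T i j - extendZero m n T (i - 1) j
            - extendZero m n T i (j - 1) + extendZero m n T (i - 1) (j - 1)
        = ∑ l, (A l i - A l (i-1)) * (B l j - B l (j-1)) := by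
      rw [hE i j, hE (i-1) j, hE i (j-1), hE (i-1) (j-1), ← Finset.sum_sub_distrib,
        ← Finset.sum_sub_distrib, ← Finset.sum_add_distrib]
      exact Finset.sum_congr rfl fun l _ => by ring
    rw [key]
    exact Finset.sum_nonneg fun l _ => mul_nonneg (hAmono l) (hBmono l)
  · intro hD
    set Dn : ℕ → ℕ → ℝ := fun p q =>
      extendZero m n T (p+1) (q+1) - extendZero m n T p (q+1)
        - extendZero m n T (p+1) q + extendZero m n T p q with hDn
    have hDnn : ∀ p q, p < m → q < n → 0 ≤ Dn p q := by
      intro p q hp hq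
      have := hD (p+1) (by simp [Finset.mem_Icc]; omega) (q+1) (by simp [Finset.mem_Icc]; omega)
      simpa using this
    refine ⟨m * n,
      fun l i => if ((finProdFinEquiv.symm l).1 : ℕ) ≤ (i : ℕ)
        then Dn (finProdFinEquiv.symm l).1 (finProdFinEquiv.symm l).2 else 0,
      fun l j => if ((finProdFinEquiv.symm l).2 : ℕ) ≤ (j : ℕ) then 1 else 0, ?_, ?_, ?_⟩
    · intro l
      constructor
      · intro i; dsimp only; split_ifs
        · exact hDnn _ _ (Fin.is_lt _) (Fin.is_lt _)
        · exact le_refl 0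
      · intro x y hxy; dsimp only
        split_ifs with h1 h2 h2
        · exact le_refl _
        · exact absurd (h1.trans hxy) h2
        · exact hDnn _ _ (Fin.is_lt _) (Fin.is_lt _)
        · exact le_refl _
    · intro l
      constructor
      · intro j; dsimp only; split_ifs
        · exact zero_le_one
        · exact le_refl 0
      · intro x y hxy; dsimp only
        split_ifs with h1 h2 h2
        · exact le_refl _
        · exact absurd (h1.trans hxy) h2
        · exact zero_le_one
        · exact le_refl _
    · intro i j
      have e1 : ∑ l : Fin (m * n),
          (if ((finProdFinEquiv.symm l).1 : ℕ) ≤ (i : ℕ)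
            then Dn (finProdFinEquiv.symm l).1 (finProdFinEquiv.symm l).2 else 0)
          * (if ((finProdFinEquiv.symm l).2 : ℕ) ≤ (j : ℕ) then 1 else 0)
          = ∑ pq : Fin m × Fin n,
          (if (pq.1 : ℕ) ≤ (i : ℕ) then Dn pq.1 pq.2 else 0)
          * (if (pq.2 : ℕ) ≤ (j : ℕ) then 1 else 0) :=
        Equiv.sum_comp finProdFinEquiv.symm
          (fun pq : Fin m × Fin n => (if (pq.1 : ℕ) ≤ (i : ℕ) then Dn pq.1 pq.2 else 0)
            * (if (pq.2 : ℕ) ≤ (j : ℕ) then 1 else 0))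
      rw [e1, Fintype.sum_prod_type]
      have e2 : ∀ p : Fin m, ∑ q : Fin n,
          (if (p : ℕ) ≤ (i : ℕ) then Dn p q else 0) * (if (q : ℕ) ≤ (j : ℕ) then 1 else 0)
          = if (p : ℕ) ≤ (i : ℕ) then ∑ q ∈ Finset.range (j + 1), Dn p q else 0 := by
        intro p
        by_cases hp : (p : ℕ) ≤ (i : ℕ)
        · simp only [if_pos hp]
          rw [← sum_range_ite n j j.is_lt (Dn p), ← Fin.sum_univ_eq_sum_range
            (fun q => if q ≤ (j : ℕ) then Dn p q else 0) n]
          exact Finset.sum_congr rfl fun q _ => by split_ifs <;> simp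
        · simp only [if_neg hp, zero_mul, Finset.sum_const_zero]
      rw [Finset.sum_congr rfl fun p _ => e2 p]
      rw [Fin.sum_univ_eq_sum_range
        (fun p => if p ≤ (i : ℕ) then ∑ q ∈ Finset.range (j + 1), Dn p q else 0) m,
        sum_range_ite m i i.is_lt]
      rw [extendZero_tele m n T (i + 1) (j + 1)]
      unfold extendZero
      rw [dif_pos ⟨by omega, by omega, by omega, by omega⟩]
      congr 1
end

section
/- Let C₁ ⊆ ℝ^{p₁} be the set of nonnegative linear combinations of vectors w₁,…,w_{q₁}, and let C₂ ⊆ ℝ^{p₂} be the set of nonnegative linear combinations of vectors u₁,…,u_{q₂}. If a matrix T ∈ ℝ^{p₁×p₂} can be written as T = ∑_{i=1}^r a_i b_iᵀ with a_i ∈ C₁ and b_i ∈ C₂ for some r ∈ ℕ, then T can also be written as T = ∑_{i=1}^s a'_i (b'_i)ᵀ with s = min(q₁, q₂), a'_i ∈ C₁, and b'_i ∈ C₂. -/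
/-- The conical hull of a finite family of vectors: all nonnegative linear combinations. -/
def coneHull {E : Type*} [AddCommMonoid E] [Module ℝ E] {q : ℕ} (w : Fin q → E) : Set E :=
  {f | ∃ c : Fin q → ℝ, (∀ i, 0 ≤ c i) ∧ f = ∑ i, c i • w i}

lemma mem_coneHull_self {E : Type*} [AddCommMonoid E] [Module ℝ E] {q : ℕ}
    (w : Fin q → E) (j : Fin q) : w j ∈ coneHull w := by
  refine ⟨fun k => if k = j then 1 else 0, fun k => by positivity, ?_⟩
  simp [ite_smul]

lemma sum_smul_mem_coneHull {E : Type*} [AddCommMonoid E] [Module ℝ E] {q r : ℕ}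
    (w : Fin q → E) (t : Fin r → ℝ) (ht : ∀ i, 0 ≤ t i) (v : Fin r → E)
    (hv : ∀ i, v i ∈ coneHull w) : (∑ i, t i • v i) ∈ coneHull w := by
  choose c hc hvc using hv
  refine ⟨fun j => ∑ i, t i * c i j,
    fun j => Finset.sum_nonneg fun i _ => mul_nonneg (ht i) (hc i j), ?_⟩
  simp only [hvc, Finset.smul_sum, Finset.sum_smul, mul_smul]
  rw [Finset.sum_comm]

/-- if a matrix factors as a finite sum of rank-one terms `a_i b_iᵀ` with
`a_i` in the cone generated by `q₁` vectors and `b_i` in the cone generated by `q₂`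
vectors, then it also factors with `min q₁ q₂` such terms. -/
theorem factorization_with_min_terms
    (p₁ p₂ q₁ q₂ : ℕ) (w : Fin q₁ → Fin p₁ → ℝ) (u : Fin q₂ → Fin p₂ → ℝ)
    (T : Fin p₁ → Fin p₂ → ℝ)
    (hT : ∃ (r : ℕ) (a : Fin r → Fin p₁ → ℝ) (b : Fin r → Fin p₂ → ℝ),
      (∀ i, a i ∈ coneHull w) ∧ (∀ i, b i ∈ coneHull u) ∧
      ∀ x y, T x y = ∑ i, a i x * b i y) :
    ∃ (a' : Fin (min q₁ q₂) → Fin p₁ → ℝ) (b' : Fin (min q₁ q₂) → Fin p₂ → ℝ),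
      (∀ i, a' i ∈ coneHull w) ∧ (∀ i, b' i ∈ coneHull u) ∧
      ∀ x y, T x y = ∑ i, a' i x * b' i y := by
  obtain ⟨r, a, b, ha, hb, hTab⟩ := hT
  choose c hc hac using ha
  choose d hd hbd using hb
  rcases le_total q₁ q₂ with h | h
  · rw [min_eq_left h]
    refine ⟨fun j => w j, fun j => ∑ i, c i j • b i,
      fun j => mem_coneHull_self w j,
      fun j => sum_smul_mem_coneHull u _ (fun i => hc i j) b (fun i => ⟨d i, hd i, hbd i⟩),
      fun x y => ?_⟩
    rw [hTab]
    simp only [hac, Finset.sum_apply, Pi.smul_apply, smul_eq_mul, Finset.sum_mul,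
      Finset.mul_sum]
    rw [Finset.sum_comm]
    exact Finset.sum_congr rfl fun j _ => Finset.sum_congr rfl fun i _ => by ring
  · rw [min_eq_right h]
    refine ⟨fun k => ∑ i, d i k • a i, fun k => u k,
      fun k => sum_smul_mem_coneHull w _ (fun i => hd i k) a (fun i => ⟨c i, hc i, hac i⟩),
      fun k => mem_coneHull_self u k,
      fun x y => ?_⟩
    rw [hTab]
    simp only [hbd, Finset.sum_apply, Pi.smul_apply, smul_eq_mul, Finset.sum_mul,
      Finset.mul_sum]
    rw [Finset.sum_comm]
    exact Finset.sum_congr rfl fun j _ => Finset.sum_congr rfl fun i _ => by ring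
end

section
/- Let P₁ and P₂ be finite partially ordered sets, where the Hasse diagram of P₂ contains no collider (so that C(P₂) is simplicial), let q₁ be the number of extreme rays of C(P₁), and let q₂ = |P₂|. Then: (a) every matrix T : P₁ × P₂ → ℝ that admits an ND factorization admits one with at most min(q₁, q₂) terms; and (b) there exists a matrix T : P₁ × P₂ → ℝ admitting an ND factorization but admitting no ND factorization with fewer than min(q₁, q₂) terms. -/
open Finset Function

section Cone

variable {E : Type*} [AddCommMonoid E] [Module ℝ E]

def ray (v : E) : Set E := {x | ∃ α : ℝ, 0 ≤ α ∧ x = α • v}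

lemma mem_ray_self (v : E) : v ∈ ray v := ⟨1, zero_le_one, (one_smul ℝ v).symm⟩

lemma ray_smul {c : ℝ} (hc : 0 < c) (v : E) : ray (c • v) = ray v := by
  ext x
  constructor
  · rintro ⟨α, hα, rfl⟩
    exact ⟨α * c, by positivity, by rw [smul_smul]⟩
  · rintro ⟨β, hβ, rfl⟩
    exact ⟨β / c, by positivity, by rw [smul_smul, div_mul_cancel₀ _ hc.ne']⟩

lemma SpansExtremeRay.exists_eq_smul_of_eq_sum {C : PointedCone ℝ E} {v : E}
    (hv : SpansExtremeRay (C : Set E) v) {ι : Type*} [Fintype ι] {w : ι → ℝ} {a : ι → E}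
    (hw : ∀ i, 0 ≤ w i) (ha : ∀ i, a i ∈ C) (hsum : v = ∑ i, w i • a i) :
    ∃ i, ∃ c : ℝ, 0 < c ∧ a i = c • v := by
  classical
  have hterm : ∀ i, ∃ α : ℝ, 0 ≤ α ∧ w i • a i = α • v := fun i =>
    (hv.2.2 _ (∑ j ∈ univ.erase i, w j • a j) (C.smul_mem (hw i) (ha i))
      (C.sum_mem fun j _ => C.smul_mem (hw j) (ha j))
      (hsum.trans (add_sum_erase univ (fun j => w j • a j) (mem_univ i)).symm)).1
  choose α hα0 hα using hterm
  obtain ⟨i, hi⟩ : ∃ i, α i ≠ 0 := by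
    by_contra! h
    exact hv.2.1 (by rw [hsum]; simp [hα, h])
  have hwi : w i ≠ 0 := by
    rintro h0
    have := hα i
    rw [h0, zero_smul, eq_comm, smul_eq_zero] at this
    exact this.elim hi hv.2.1
  refine ⟨i, α i / w i, div_pos ((hα0 i).lt_of_ne' hi) ((hw i).lt_of_ne' hwi), ?_⟩
  rw [div_eq_inv_mul, mul_smul, ← hα, smul_smul, inv_mul_cancel₀ hwi, one_smul]

end Cone

lemma eq_of_smul_indicator_one_eq {α : Type*} {U V : Set α} {c d : ℝ} (hc : c ≠ 0) (hd : d ≠ 0)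
    (h : c • U.indicator (1 : α → ℝ) = d • V.indicator 1) : U = V := by
  have := congrArg support h
  simpa [support_const_smul_of_ne_zero _ _ hc, support_const_smul_of_ne_zero _ _ hd,
    Set.support_indicator] using this

section OrderCone

variable {P : Type*} [PartialOrder P]

def orderPointedCone (P : Type*) [PartialOrder P] : PointedCone ℝ (P → ℝ) where
  carrier := orderCone P
  add_mem' hf hg :=
    ⟨fun x => add_nonneg (hf.1 x) (hg.1 x), fun _ _ h => add_le_add (hf.2 h) (hg.2 h)⟩
  zero_mem' := ⟨fun _ => le_rfl, fun _ _ _ => le_rfl⟩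
  smul_mem' c _ hf :=
    ⟨fun x => mul_nonneg c.2 (hf.1 x), fun _ _ h => mul_le_mul_of_nonneg_left (hf.2 h) c.2⟩

lemma IsUpperSet.indicator_one_mem_orderCone {U : Set P} (hU : IsUpperSet U) :
    U.indicator 1 ∈ orderCone P := by
  refine ⟨fun x => Set.indicator_nonneg (fun _ _ => zero_le_one) x, fun x y hxy => ?_⟩
  by_cases hx : x ∈ U
  · simp [hx, hU hxy hx]
  · simp only [Set.indicator_of_notMem hx]
    exact Set.indicator_nonneg (fun _ _ => zero_le_one) y

end OrderCone

section ConnectedUpperSet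

variable {P : Type*} [PartialOrder P]

/-- For an upper set `U`, admitting no splitting into two nonempty upper sets is connectedness of
the Hasse diagram restricted to `U`. -/
def IsConnectedUpperSet (U : Set P) : Prop :=
  U.Nonempty ∧ IsUpperSet U ∧
    ∀ V ⊆ U, IsUpperSet V → IsUpperSet (U \ V) → V = ∅ ∨ V = U

abbrev ConnectedUpperSet (P : Type*) [PartialOrder P] := {U : Set P // IsConnectedUpperSet U}

noncomputable instance [Finite P] : Fintype (ConnectedUpperSet P) := Fintype.ofFinite _

lemma IsConnectedUpperSet.apply_eq {β : Type*} {U : Set P} (hU : IsConnectedUpperSet U)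
    {φ : P → β} (hφ : ∀ x ∈ U, ∀ y, x ≤ y → φ y = φ x) {x y : P} (hx : x ∈ U) (hy : y ∈ U) :
    φ x = φ y := by
  obtain ⟨-, hUup, hUconn⟩ := hU
  have hV : IsUpperSet {z ∈ U | φ z = φ x} := fun a b hab ha =>
    ⟨hUup hab ha.1, (hφ a ha.1 b hab).trans ha.2⟩
  have hUV : IsUpperSet (U \ {z ∈ U | φ z = φ x}) := fun a b hab ha =>
    ⟨hUup hab ha.1, fun hb => ha.2 ⟨ha.1, (hφ a ha.1 b hab).symm.trans hb.2⟩⟩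
  rcases hUconn _ (fun z hz => hz.1) hV hUV with h | h
  · have hxV : x ∈ {z ∈ U | φ z = φ x} := ⟨hx, rfl⟩
    simp [h] at hxV
  · have hyV : y ∈ {z ∈ U | φ z = φ x} := by rw [h]; exact hy
    exact hyV.2.symm

/-- Both summands are monotone while their sum is constant on `U`, so each summand is constant
along comparable pairs in `U`. -/
lemma IsConnectedUpperSet.eq_smul_of_add_eq {U : Set P} (hU : IsConnectedUpperSet U)
    {g h : P → ℝ} (hg : g ∈ orderCone P) (hh : h ∈ orderCone P) (hgh : g + h = U.indicator 1)
    {x₀ : P} (hx₀ : x₀ ∈ U) : g = g x₀ • U.indicator 1 := by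
  have hsum x : g x + h x = U.indicator 1 x := congrFun hgh x
  funext x
  by_cases hx : x ∈ U
  · have hconst := hU.apply_eq (φ := g) (fun a ha b hab => by
      have := hsum a; have := hsum b
      simp only [Set.indicator_of_mem ha, Set.indicator_of_mem (hU.2.1 hab ha), Pi.one_apply] at *
      linarith [hg.2 hab, hh.2 hab]) hx hx₀
    simp [hx, hconst]
  · have := hsum x
    simp only [Set.indicator_of_notMem hx, Pi.smul_apply, smul_zero] at this ⊢
    linarith [hg.1 x, hh.1 x]

lemma IsConnectedUpperSet.spansExtremeRay {U : Set P} (hU : IsConnectedUpperSet U) :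
    SpansExtremeRay (orderCone P) (U.indicator 1) := by
  obtain ⟨x₀, hx₀⟩ := hU.1
  refine ⟨hU.2.1.indicator_one_mem_orderCone, fun h => ?_, fun g h hg hh hgh => ?_⟩
  · simpa [hx₀] using congrFun h x₀
  · exact ⟨⟨g x₀, hg.1 x₀, hU.eq_smul_of_add_eq hg hh hgh.symm hx₀⟩,
      ⟨h x₀, hh.1 x₀, hU.eq_smul_of_add_eq hh hg (add_comm h g ▸ hgh.symm) hx₀⟩⟩

end ConnectedUpperSet

section Decomposition

variable {P : Type*} [PartialOrder P]

/-- The witness is a minimal piece of `S` containing `x` that splits off `S` as an upper set. -/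
lemma IsUpperSet.exists_isConnectedUpperSet [Finite P] {S : Set P} (hS : IsUpperSet S) {x : P}
    (hx : x ∈ S) : ∃ U, IsConnectedUpperSet U ∧ x ∈ U ∧ U ⊆ S ∧ IsUpperSet (S \ U) := by
  obtain ⟨U, ⟨hxU, hUS, hU, hSU⟩, hmin⟩ := Set.Finite.exists_minimal
    (s := {U : Set P | x ∈ U ∧ U ⊆ S ∧ IsUpperSet U ∧ IsUpperSet (S \ U)}) (Set.toFinite _)
    ⟨S, hx, subset_rfl, hS, by simpa using isUpperSet_empty⟩
  refine ⟨U, ⟨⟨x, hxU⟩, hU, fun V hVU hV hUV => ?_⟩, hxU, hUS, hSU⟩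
  by_cases hxV : x ∈ V
  · have hSV : IsUpperSet (S \ V) := by
      rw [← Set.sdiff_union_sdiff_cancel hUS hVU]
      exact hSU.union hUV
    exact .inr (hVU.antisymm (hmin ⟨hxV, hVU.trans hUS, hV, hSV⟩ hVU))
  · have hSUV : IsUpperSet (S \ (U \ V)) := by
      rw [Set.sdiff_sdiff_right, Set.inter_eq_right.2 (hVU.trans hUS)]
      exact hSU.union hV
    have hUUV :=
      hmin (y := U \ V) ⟨⟨hxU, hxV⟩, Set.sdiff_subset.trans hUS, hUV, hSUV⟩ Set.sdiff_subset
    left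
    ext y
    simpa using fun hyV => (hUUV (hVU hyV)).2 hyV

lemma sub_smul_indicator_mem_orderCone {f : P → ℝ} (hf : f ∈ orderCone P) {U : Set P}
    (hU : IsUpperSet U) {m : ℝ} (hm : ∀ y ∈ U, m ≤ f y)
    (hbelow : ∀ x y, x ≤ y → x ∉ U → y ∈ U → f x = 0) :
    f - m • U.indicator 1 ∈ orderCone P := by
  refine ⟨fun x => ?_, fun x y hxy => ?_⟩
  · by_cases hx : x ∈ U
    · simpa [hx] using hm x hx
    · simpa [hx] using hf.1 x
  · by_cases hx : x ∈ U
    · simpa [hx, hU hxy hx] using hf.2 hxy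
    · by_cases hy : y ∈ U
      · simpa [hx, hy, hbelow x y hxy hx hy] using hm y hy
      · simpa [hx, hy] using hf.2 hxy

/-- Subtract the smallest positive value of `f` times the indicator of a component of the support
through a point where it is attained, and induct on the size of the support. -/
theorem exists_eq_sum_indicator [Finite P] {f : P → ℝ} (hf : f ∈ orderCone P) :
    ∃ c : ConnectedUpperSet P → ℝ, (∀ U, 0 ≤ c U) ∧ f = ∑ U, c U • (U : Set P).indicator 1 := by
  classical
  induction hn : (support f).ncard using Nat.strong_induction_on generalizing f with
  | _ n ih =>
  obtain rfl | hne := eq_or_ne f 0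
  · exact ⟨0, fun _ => le_rfl, by simp⟩
  obtain ⟨x₀, hx₀, hmin⟩ := Set.exists_min_image (support f) f (Set.toFinite _)
    (support_nonempty_iff.2 hne)
  have hS : IsUpperSet (support f) := fun a b hab ha =>
    (((hf.1 a).lt_of_ne' ha).trans_le (hf.2 hab)).ne'
  obtain ⟨U, hU, hx₀U, hUS, hSU⟩ := hS.exists_isConnectedUpperSet hx₀
  set g := f - f x₀ • U.indicator 1
  have hg : g ∈ orderCone P := sub_smul_indicator_mem_orderCone hf hU.2.1
    (fun y hy => hmin y (hUS hy))
    (fun a b hab haU hbU => by_contra fun ha => (hSU hab ⟨ha, haU⟩).2 hbU)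
  have hsupp : support g ⊂ support f := by
    refine (Set.ssubset_iff_of_subset fun a ha => ?_).2 ⟨x₀, hx₀, by simp [g, hx₀U]⟩
    by_contra h
    have haU : a ∉ U := fun haU => h (hUS haU)
    exact ha (by simp [g, notMem_support.1 h, haU])
  obtain ⟨c, hc, hgc⟩ := ih _ (hn ▸ Set.ncard_lt_ncard hsupp) hg rfl
  refine ⟨c + Pi.single ⟨U, hU⟩ (f x₀), fun V => add_nonneg (hc V) ?_, ?_⟩
  · rw [Pi.single_apply]
    split_ifs
    exacts [hf.1 x₀, le_rfl]
  · calc f = g + f x₀ • U.indicator 1 := by simp [g]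
      _ = _ := by simp [hgc, add_smul, sum_add_distrib, Pi.single_apply]

end Decomposition

theorem card_extremeRays (P : Type*) [PartialOrder P] [Finite P] :
    Nat.card {R : Set (P → ℝ) // ∃ v, SpansExtremeRay (orderCone P) v ∧ R = ray v} =
      Nat.card (ConnectedUpperSet P) := by
  let f : ConnectedUpperSet P →
      {R : Set (P → ℝ) // ∃ v, SpansExtremeRay (orderCone P) v ∧ R = ray v} := fun U =>
    ⟨ray ((U : Set P).indicator 1), _, U.2.spansExtremeRay, rfl⟩
  refine (Nat.card_congr (Equiv.ofBijective f ⟨fun U V hUV => ?_, ?_⟩)).symm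
  · obtain ⟨α, -, hα⟩ : (U : Set P).indicator 1 ∈ ray ((V : Set P).indicator 1) := by
      have : ray ((U : Set P).indicator 1) = ray ((V : Set P).indicator 1) :=
        congrArg Subtype.val hUV
      exact this ▸ mem_ray_self _
    obtain ⟨x, hx⟩ := U.2.1
    have hα0 : α ≠ 0 := by
      rintro rfl
      simpa [hx] using congrFun hα x
    exact Subtype.ext (eq_of_smul_indicator_one_eq one_ne_zero hα0 (by rw [one_smul, hα]))
  · rintro ⟨R, v, hv, rfl⟩
    obtain ⟨c, hc, hsum⟩ := exists_eq_sum_indicator hv.1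
    obtain ⟨U, d, hd, hU⟩ := SpansExtremeRay.exists_eq_smul_of_eq_sum
      (C := orderPointedCone P) hv hc (fun U => U.2.2.1.indicator_one_mem_orderCone) hsum
    exact ⟨U, Subtype.ext (by simp only [f, hU, ray_smul hd])⟩

section NoCollider

variable {P : Type*} [PartialOrder P]

def NoCollider (P : Type*) [PartialOrder P] : Prop := ¬ ∃ a b c : P, a ≠ b ∧ a ⋖ c ∧ b ⋖ c

/-- Without colliders every element has at most one lower cover. -/
lemma NoCollider.le_total_of_le [Finite P] (hP : NoCollider P) {x y z : P} (hy : y ≤ x)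
    (hz : z ≤ x) : y ≤ z ∨ z ≤ y := by
  induction x using WellFoundedLT.induction generalizing y z with
  | _ x ih =>
  obtain rfl | hy := hy.eq_or_lt
  · exact .inr hz
  obtain rfl | hz := hz.eq_or_lt
  · exact .inl hy.le
  obtain ⟨w, hyw, hwx⟩ := hy.exists_le_covby
  obtain ⟨w', hzw', hw'x⟩ := hz.exists_le_covby
  obtain rfl : w = w' := by_contra fun hne => hP ⟨w, w', x, hne, hwx, hw'x⟩
  exact ih w hwx.lt hyw hzw'

lemma isConnectedUpperSet_Ici (y : P) : IsConnectedUpperSet (Set.Ici y) := by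
  refine ⟨⟨y, le_rfl⟩, isUpperSet_Ici y, fun V hVy hV hyV => ?_⟩
  by_cases hy : y ∈ V
  · exact .inr (hVy.antisymm fun z hz => hV hz hy)
  · refine .inl (Set.eq_empty_of_forall_notMem fun z hz => ?_)
    exact (hyV (hVy hz) ⟨le_rfl, hy⟩).2 hz

lemma NoCollider.exists_eq_Ici [Finite P] (hP : NoCollider P) {U : Set P}
    (hU : IsConnectedUpperSet U) : ∃ y, U = Set.Ici y := by
  obtain ⟨y, hyU, hy⟩ := Set.Finite.exists_minimal (Set.toFinite U) hU.1
  refine ⟨y, (hU.2.2 (Set.Ici y) (fun z hz => hU.2.1 hz hyU) (isUpperSet_Ici y) ?_).resolve_left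
    Set.nonempty_Ici.ne_empty |>.symm⟩
  rintro a b hab ⟨haU, hya⟩
  refine ⟨hU.2.1 hab haU, fun hyb => hya ?_⟩
  exact (hP.le_total_of_le hab hyb).elim (hy haU) id

noncomputable def NoCollider.equivConnectedUpperSet [Finite P] (hP : NoCollider P) :
    P ≃ ConnectedUpperSet P :=
  Equiv.ofBijective (fun y => ⟨Set.Ici y, isConnectedUpperSet_Ici y⟩)
    ⟨fun _ _ h => Set.Ici_injective (congrArg Subtype.val h), fun U =>
      (hP.exists_eq_Ici U.2).imp fun _ hy => Subtype.ext hy.symm⟩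

lemma NoCollider.exists_eq_sum_indicator_Ici [Fintype P] (hP : NoCollider P) {f : P → ℝ}
    (hf : f ∈ orderCone P) :
    ∃ μ : P → ℝ, (∀ y, 0 ≤ μ y) ∧ f = ∑ y, μ y • (Set.Ici y).indicator 1 := by
  obtain ⟨c, hc, rfl⟩ := exists_eq_sum_indicator hf
  exact ⟨c ∘ hP.equivConnectedUpperSet, fun _ => hc _,
    (Equiv.sum_comp hP.equivConnectedUpperSet _).symm⟩

/-- Evaluate a vanishing combination at a minimal element of its support. -/
lemma linearIndependent_indicator_Ici :
    LinearIndependent ℝ fun y : P => (Set.Ici y).indicator (1 : P → ℝ) := by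
  classical
  refine linearIndependent_iff'.2 fun s g hg => ?_
  by_contra! h
  obtain ⟨y, hy, hmin⟩ := exists_minimal (s := s.filter (g · ≠ 0))
    (h.imp fun y hy => by simpa using hy)
  have hy' := mem_filter.1 hy
  apply hy'.2
  have := congrFun hg y
  rw [Finset.sum_apply, sum_eq_single y] at this
  · simpa using this
  · intro z hz hzy
    by_cases hzy' : z ≤ y
    · have : g z = 0 := by_contra fun hgz =>
        hzy (le_antisymm hzy' (hmin (mem_filter.2 ⟨hz, hgz⟩) hzy'))
      simp [this]
    · simp [hzy']
  · exact fun h => absurd hy'.1 h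

/-- Expand the right factors in the basis `1_{Ici z}` and compare coefficients. -/
lemma NoCollider.exists_eq_sum_smul [Fintype P] (hP : NoCollider P) {ι : Type*} [Fintype ι]
    {α : Type*} {g : P → α → ℝ} {a : ι → α → ℝ} {b : ι → P → ℝ} (hb : ∀ i, b i ∈ orderCone P)
    (hT : ∀ x y, ∑ z, g z x * (Set.Ici z).indicator 1 y = ∑ i, a i x * b i y) (z : P) :
    ∃ w : ι → ℝ, (∀ i, 0 ≤ w i) ∧ g z = ∑ i, w i • a i := by
  choose μ hμ hbμ using fun i => hP.exists_eq_sum_indicator_Ici (hb i)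
  refine ⟨fun i => μ i z, fun i => hμ i z, funext fun x => ?_⟩
  have hcoeff := Fintype.linearIndependent_iffₛ.1 linearIndependent_indicator_Ici
    (fun z => g z x) (fun z => ∑ i, μ i z * a i x) (funext fun y => ?_) z
  · simpa [Finset.sum_apply] using hcoeff
  simp only [Finset.sum_apply, Pi.smul_apply, smul_eq_mul, hT, hbμ, sum_mul,
    mul_sum]
  rw [sum_comm]
  exact sum_congr rfl fun _ _ => sum_congr rfl fun _ _ => by ring

end NoCollider

section NDFactorization

variable {P₁ P₂ : Type*} [PartialOrder P₁] [PartialOrder P₂] {T : P₁ → P₂ → ℝ} {r : ℕ}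

lemma hasNDFact_of_fintype {ι : Type*} [Fintype ι] (a : ι → P₁ → ℝ) (b : ι → P₂ → ℝ)
    (ha : ∀ i, a i ∈ orderCone P₁) (hb : ∀ i, b i ∈ orderCone P₂)
    (hT : ∀ x y, T x y = ∑ i, a i x * b i y) : HasNDFact T (Fintype.card ι) :=
  ⟨a ∘ (Fintype.equivFin ι).symm, b ∘ (Fintype.equivFin ι).symm, fun _ => ha _, fun _ => hb _,
    fun x y => (hT x y).trans (Equiv.sum_comp (Fintype.equivFin ι).symm _).symm⟩

lemma HasNDFact.flip (h : HasNDFact T r) : HasNDFact (flip T) r := by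
  obtain ⟨a, b, ha, hb, hT⟩ := h
  exact ⟨b, a, hb, ha, fun y x => by simp [Function.flip_def, hT, mul_comm]⟩

lemma HasNDFact.of_forall_eq_sum {K : Type*} [Fintype K] (h : HasNDFact T r)
    (e : K → P₁ → ℝ) (he : ∀ k, e k ∈ orderCone P₁)
    (hspan : ∀ f ∈ orderCone P₁, ∃ c : K → ℝ, (∀ k, 0 ≤ c k) ∧ f = ∑ k, c k • e k) :
    HasNDFact T (Fintype.card K) := by
  obtain ⟨a, b, ha, hb, hT⟩ := h
  choose c hc hac using fun i => hspan (a i) (ha i)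
  refine hasNDFact_of_fintype e (fun k => ∑ i, c i k • b i) he
    (fun k => (orderPointedCone P₂).sum_mem fun i _ =>
      (orderPointedCone P₂).smul_mem (hc i k) (hb i)) fun x y => ?_
  simp only [hT, hac, Finset.sum_apply, Pi.smul_apply, smul_eq_mul, sum_mul,
    mul_sum]
  rw [sum_comm]
  exact sum_congr rfl fun _ _ => sum_congr rfl fun _ _ => by ring

lemma HasNDFact.card_connectedUpperSet [Finite P₁] (h : HasNDFact T r) :
    HasNDFact T (Nat.card (ConnectedUpperSet P₁)) := by
  rw [Nat.card_eq_fintype_card]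
  exact h.of_forall_eq_sum _ (fun U => U.2.2.1.indicator_one_mem_orderCone)
    fun _ => exists_eq_sum_indicator

lemma HasNDFact.card_of_noCollider [Fintype P₂] (hP : NoCollider P₂) (h : HasNDFact T r) :
    HasNDFact T (Fintype.card P₂) :=
  (h.flip.of_forall_eq_sum _ (fun y => (isUpperSet_Ici y).indicator_one_mem_orderCone)
    fun _ => hP.exists_eq_sum_indicator_Ici).flip

end NDFactorization

theorem exists_hasNDFact_forall_le {P₁ P₂ : Type*} [PartialOrder P₁] [PartialOrder P₂]
    [Finite P₁] [Fintype P₂] (hP : NoCollider P₂) {k : ℕ}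
    (hk₁ : k ≤ Nat.card (ConnectedUpperSet P₁)) (hk₂ : k ≤ Fintype.card P₂) :
    ∃ T : P₁ → P₂ → ℝ, (∃ m, HasNDFact T m) ∧ ∀ r, HasNDFact T r → k ≤ r := by
  obtain ⟨U⟩ : Nonempty (Fin k ↪ ConnectedUpperSet P₁) :=
    Function.Embedding.nonempty_of_card_le (by simpa [Nat.card_eq_fintype_card] using hk₁)
  obtain ⟨z⟩ : Nonempty (Fin k ↪ P₂) := Function.Embedding.nonempty_of_card_le (by simpa using hk₂)
  let G : P₂ → Set P₁ := extend z (fun j => (U j : Set P₁)) fun _ => ∅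
  have hGz : ∀ j, G (z j) = U j := z.injective.extend_apply _ _
  have hG : ∀ y, IsUpperSet (G y) := fun y => by
    by_cases h : ∃ j, z j = y
    · obtain ⟨j, rfl⟩ := h
      exact hGz j ▸ (U j).2.2.1
    · simpa [G, extend_apply' _ _ _ h] using isUpperSet_empty
  refine ⟨fun x y => ∑ w, (G w).indicator 1 x * (Set.Ici w).indicator 1 y,
    ⟨_, hasNDFact_of_fintype _ _ (fun w => (hG w).indicator_one_mem_orderCone)
      (fun w => (isUpperSet_Ici w).indicator_one_mem_orderCone) fun _ _ => rfl⟩, ?_⟩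
  rintro r ⟨a, b, ha, hb, hT⟩
  have hU : ∀ j, ∃ i, ∃ c : ℝ, 0 < c ∧ a i = c • (U j : Set P₁).indicator 1 := fun j => by
    obtain ⟨w, hw, hsum⟩ := hP.exists_eq_sum_smul hb hT (z j)
    rw [hGz] at hsum
    exact (U j).2.spansExtremeRay.exists_eq_smul_of_eq_sum (C := orderPointedCone P₁) hw ha hsum
  choose φ c hc hφ using hU
  have hφ_inj : Injective φ := fun j j' h => U.injective <| Subtype.ext <|
    eq_of_smul_indicator_one_eq (hc j).ne' (hc j').ne' ((hφ j).symm.trans (h ▸ hφ j'))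
  simpa using Fintype.card_le_of_injective φ hφ_inj

/-- if `C(P₁)` has `q₁` extreme rays, `P₂` has no colliders (so `C(P₂)` is
simplicial) with `q₂ = |P₂|`, then every finite-ND-rank matrix has an ND factorization
with at most `min q₁ q₂` terms, and some finite-ND-rank matrix requires `min q₁ q₂`
terms. -/
theorem max_NDrank_simplicial
    (P₁ P₂ : Type*) [Fintype P₁] [Fintype P₂] [PartialOrder P₁] [PartialOrder P₂]
    (hnc₂ : ¬ ∃ a b c : P₂, a ≠ b ∧ a ⋖ c ∧ b ⋖ c)
    (q₁ q₂ : ℕ)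
    (hq₁ : Nat.card {R : Set (P₁ → ℝ) // ∃ v : P₁ → ℝ,
      SpansExtremeRay (orderCone P₁) v ∧ R = {x | ∃ α : ℝ, 0 ≤ α ∧ x = α • v}} = q₁)
    (hq₂ : Fintype.card P₂ = q₂) :
    (∀ T : P₁ → P₂ → ℝ, (∃ m, HasNDFact T m) → HasNDFact T (min q₁ q₂)) ∧
    (∃ T : P₁ → P₂ → ℝ, (∃ m, HasNDFact T m) ∧
      ∀ r : ℕ, HasNDFact T r → min q₁ q₂ ≤ r) := by
  have hcard : Nat.card (ConnectedUpperSet P₁) = q₁ := (card_extremeRays P₁).symm.trans hq₁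
  subst hcard hq₂
  refine ⟨fun T ⟨m, hT⟩ => ?_, exists_hasNDFact_forall_le hnc₂ (min_le_left _ _) (min_le_right _ _)⟩
  rcases le_total (Nat.card (ConnectedUpperSet P₁)) (Fintype.card P₂) with h | h
  · rw [min_eq_left h]
    exact hT.card_connectedUpperSet
  · rw [min_eq_right h]
    exact hT.card_of_noCollider hnc₂
end

section
/- Let P₁,…,P_k be finite partially ordered sets and for each j let v_j : P_j → ℝ be a vector. Define T : P₁ × ⋯ × P_k → ℝ by T(x₁,…,x_k) = ∏_{j=1}^k v_j(x_j). If T is not identically zero, T(x) ≥ 0 for all x, and T is monotone with respect to the product order (T(x) ≤ T(y) whenever x_j ≤ y_j in P_j for all j), then there exist w_j ∈ C(P_j) for j = 1,…,k such that T(x₁,…,x_k) = ∏_{j=1}^k w_j(x_j) for all (x₁,…,x_k). -/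
/-- a rank-one tensor that is nonzero, nonnegative, and monotone with
respect to the product order can be written as an outer product of vectors from the order
cones. -/
theorem rank_one_monotone_tensor_has_ND_rank_one
    (k : ℕ) (P : Fin k → Type*) [∀ j, Fintype (P j)] [∀ j, PartialOrder (P j)]
    (v : ∀ j, P j → ℝ)
    (hne : (fun x : ∀ j, P j => ∏ j, v j (x j)) ≠ 0)
    (hnn : ∀ x : ∀ j, P j, 0 ≤ ∏ j, v j (x j))
    (hmono : Monotone (fun x : ∀ j, P j => ∏ j, v j (x j))) :
    ∃ w : ∀ j, P j → ℝ, (∀ j, w j ∈ orderCone (P j)) ∧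
      ∀ x : ∀ j, P j, ∏ j, v j (x j) = ∏ j, w j (x j) := by
  obtain ⟨x₀, hx₀⟩ : ∃ x : ∀ j, P j, ∏ j, v j (x j) ≠ 0 := by
    by_contra h
    push_neg at h
    exact hne (funext fun x => h x)
  have hvx₀ : ∀ j, v j (x₀ j) ≠ 0 := by
    intro j hj
    exact hx₀ (Finset.prod_eq_zero (Finset.mem_univ j) hj)
  set ε : ∀ j : Fin k, ℝ := fun j => if v j (x₀ j) < 0 then -1 else 1 with hε
  have hεsq : ∀ j, ε j * ε j = 1 := by
    intro j; simp only [hε]; split <;> norm_num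
  have hεpos : ∀ j, 0 < ε j * v j (x₀ j) := by
    intro j
    simp only [hε]
    split
    · next h => nlinarith
    · next h =>
      have h' : 0 < v j (x₀ j) := lt_of_le_of_ne (not_lt.mp h) (Ne.symm (hvx₀ j))
      linarith
  have h3 : 0 < ∏ j, v j (x₀ j) := lt_of_le_of_ne (hnn x₀) (Ne.symm hx₀)
  -- ∏ ε = 1
  have hprodε : ∏ j, ε j = 1 := by
    have h1 : (∏ j, ε j) * (∏ j, ε j) = 1 := by
      rw [← Finset.prod_mul_distrib]
      simp only [hεsq]
      exact Finset.prod_const_one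
    have h2 : 0 < (∏ j, ε j) * ∏ j, v j (x₀ j) := by
      rw [← Finset.prod_mul_distrib]
      exact Finset.prod_pos fun j _ => hεpos j
    have h4 : 0 < ∏ j, ε j := by nlinarith
    nlinarith [sq_nonneg ((∏ j, ε j) - 1)]
  -- product over an updated point
  have hupd : ∀ (j : Fin k) (a : P j), ∏ i, v i (Function.update x₀ j a i)
      = v j a * ∏ i ∈ Finset.univ.erase j, v i (x₀ i) := by
    intro j a
    rw [← Finset.mul_prod_erase Finset.univ (fun i => v i (Function.update x₀ j a i))
        (Finset.mem_univ j)]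
    congr 1
    · simp
    · apply Finset.prod_congr rfl
      intro i hi
      rw [Function.update_of_ne (Finset.ne_of_mem_erase hi)]
  -- erase-product relation: C j = ε j * D j where D j > 0
  have hD : ∀ j : Fin k, 0 < ∏ i ∈ Finset.univ.erase j, ε i * v i (x₀ i) :=
    fun j => Finset.prod_pos fun i _ => hεpos i
  have hC : ∀ j : Fin k, ∏ i ∈ Finset.univ.erase j, v i (x₀ i)
      = ε j * ∏ i ∈ Finset.univ.erase j, ε i * v i (x₀ i) := by
    intro j
    rw [Finset.prod_mul_distrib, ← mul_assoc]
    have : ε j * ∏ i ∈ Finset.univ.erase j, ε i = ∏ i, ε i :=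
      Finset.mul_prod_erase Finset.univ ε (Finset.mem_univ j)
    rw [this, hprodε, one_mul]
  -- key: T(update x₀ j a) = (ε j * v j a) * D j
  have hkey : ∀ (j : Fin k) (a : P j), ∏ i, v i (Function.update x₀ j a i)
      = (ε j * v j a) * ∏ i ∈ Finset.univ.erase j, ε i * v i (x₀ i) := by
    intro j a
    rw [hupd j a, hC j]; ring
  refine ⟨fun j a => ε j * v j a, fun j => ⟨?_, ?_⟩, ?_⟩
  · intro a
    have := hnn (Function.update x₀ j a)
    rw [hkey j a] at this
    exact nonneg_of_mul_nonneg_left this (hD j)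
  · intro a b hab
    have hle : Function.update x₀ j a ≤ Function.update x₀ j b := by
      intro i
      by_cases hij : i = j
      · subst hij; simp [hab]
      · simp [Function.update_of_ne hij]
    have := hmono hle
    simp only at this
    rw [hkey j a, hkey j b] at this
    exact le_of_mul_le_mul_right this (hD j)
  · intro x
    rw [Finset.prod_mul_distrib, hprodε, one_mul]
end

section
/- Let P₁ and P₂ be finite partially ordered sets and let T : P₁ × P₂ → ℝ be a matrix of rank 2 (as a real matrix) that admits a factorization T = ∑_{i=1}^r a_i b_iᵀ for some r ∈ ℕ with a_i ∈ C(P₁) and b_i ∈ C(P₂). Then T admits such a factorization with exactly two terms: there exist a'₁, a'₂ ∈ C(P₁) and b'₁, b'₂ ∈ C(P₂) with T = a'₁ (b'₁)ᵀ + a'₂ (b'₂)ᵀ. -/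
/-!
The columns of `T`, together with the increments `T.col y' - T.col y` for `y ≤ y'`, lie in the
order cone of `P₁` and span the two-dimensional column space. A finite set in a plane on which a
functional `φ` is positive away from `0` lies in the wedge between its two extreme elements
`u₁, u₂`, those minimising and maximising `ψ / φ` for a second functional `ψ`. So every column is
`l₁ (T.col y) • u₁ + l₂ (T.col y) • u₂` for linear functionals `l₁, l₂` that are nonnegative on
columns and increments, which says exactly that `y ↦ lⱼ (T.col y)` lies in the order cone of `P₂`.
-/

open Module Submodule

section
variable {𝕜 E : Type*} [Field 𝕜] [AddCommGroup E] [Module 𝕜 E]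

theorem eq_smul_add_smul_of_finrank_eq_two {W : Submodule 𝕜 E} (hW : finrank 𝕜 W = 2)
    {u₁ u₂ : E} (hu₁ : u₁ ∈ W) (hu₂ : u₂ ∈ W) {l₁ l₂ : Dual 𝕜 E}
    (h₁₁ : l₁ u₁ = 1) (h₁₂ : l₁ u₂ = 0) (h₂₁ : l₂ u₁ = 0) (h₂₂ : l₂ u₂ = 1)
    {w : E} (hw : w ∈ W) : w = l₁ w • u₁ + l₂ w • u₂ := by
  have hind : LinearIndependent 𝕜 ![u₁, u₂] := by
    refine LinearIndependent.pair_iff.mpr fun a b hab => ⟨?_, ?_⟩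
    · simpa [h₁₁, h₁₂] using congrArg l₁ hab
    · simpa [h₂₁, h₂₂] using congrArg l₂ hab
  have : FiniteDimensional 𝕜 W := Module.finite_of_finrank_eq_succ hW
  have hspan : span 𝕜 {u₁, u₂} = W := by
    refine eq_of_le_of_finrank_eq (span_le.mpr (Set.insert_subset hu₁ (by simpa using hu₂))) ?_
    rw [hW, ← Matrix.range_cons_cons_empty, finrank_span_eq_card hind, Fintype.card_fin]
  obtain ⟨a, b, rfl⟩ := mem_span_pair.mp (hspan ▸ hw)
  simp [h₁₁, h₁₂, h₂₁, h₂₂]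

theorem exists_notMem_span_singleton_of_one_lt_finrank {s : Set E}
    (hs : 1 < finrank 𝕜 (span 𝕜 s)) (u : E) : ∃ v ∈ s, v ∉ span 𝕜 {u} := by
  by_contra! h
  have hle : span 𝕜 s ≤ span 𝕜 {u} := span_le.mpr h
  have := (Submodule.finrank_mono hle).trans (by simpa using finrank_span_le_card (R := 𝕜) {u})
  omega

theorem exists_dual_ratio_ne_of_one_lt_finrank {s : Set E}
    (hs : 1 < finrank 𝕜 (span 𝕜 s)) (φ : Dual 𝕜 E) (hφ : ∀ w ∈ s, w ≠ 0 → φ w ≠ 0) :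
    ∃ ψ : Dual 𝕜 E, ∃ u ∈ s, ∃ v ∈ s, u ≠ 0 ∧ v ≠ 0 ∧ ψ u / φ u ≠ ψ v / φ v := by
  obtain ⟨u, hus, hu⟩ := exists_notMem_span_singleton_of_one_lt_finrank hs 0
  obtain ⟨v, hvs, hv⟩ := exists_notMem_span_singleton_of_one_lt_finrank hs u
  obtain ⟨ψ, hψv, hψu⟩ := exists_dual_map_eq_bot_of_notMem hv inferInstance
  have hu0 : u ≠ 0 := by simpa using hu
  have hv0 : v ≠ 0 := fun h => hv (h ▸ zero_mem _)
  have hψu0 : ψ u = 0 := by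
    simpa [hψu] using mem_map_of_mem (f := ψ) (mem_span_singleton_self u)
  refine ⟨ψ, u, hus, v, hvs, hu0, hv0, ?_⟩
  rw [hψu0, zero_div]
  exact (div_ne_zero hψv (hφ v hvs hv0)).symm

variable [LinearOrder 𝕜] [IsStrictOrderedRing 𝕜]

theorem exists_dual_nonneg_on_wedge (φ ψ : Dual 𝕜 E) {t₁ t₂ : 𝕜} (ht : t₁ < t₂) {u₁ u₂ : E}
    (hφ₁ : 0 < φ u₁) (hφ₂ : 0 < φ u₂) (hψ₁ : ψ u₁ = t₁ * φ u₁) (hψ₂ : ψ u₂ = t₂ * φ u₂) :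
    ∃ l₁ l₂ : Dual 𝕜 E,
      (∀ w, t₁ * φ w ≤ ψ w → ψ w ≤ t₂ * φ w → 0 ≤ l₁ w ∧ 0 ≤ l₂ w) ∧
      l₁ u₁ = 1 ∧ l₁ u₂ = 0 ∧ l₂ u₁ = 0 ∧ l₂ u₂ = 1 := by
  have hΔ : 0 < t₂ - t₁ := sub_pos.mpr ht
  refine ⟨(φ u₁ * (t₂ - t₁))⁻¹ • (t₂ • φ - ψ), (φ u₂ * (t₂ - t₁))⁻¹ • (ψ - t₁ • φ), ?_⟩
  simp only [LinearMap.smul_apply, LinearMap.sub_apply, smul_eq_mul, hψ₁, hψ₂]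
  refine ⟨fun w hw₁ hw₂ => ⟨mul_nonneg (by positivity) (by linarith),
    mul_nonneg (by positivity) (by linarith)⟩, ?_, ?_, ?_, ?_⟩ <;>
  field_simp <;> ring

theorem Set.Finite.exists_extreme_pair_of_finrank_span_eq_two {s : Set E} (hs : s.Finite)
    (hrank : finrank 𝕜 (span 𝕜 s) = 2) (φ : Dual 𝕜 E) (hφ : ∀ w ∈ s, w ≠ 0 → 0 < φ w) :
    ∃ u₁ ∈ s, ∃ u₂ ∈ s, ∃ l₁ l₂ : Dual 𝕜 E,
      (∀ w ∈ s, 0 ≤ l₁ w ∧ 0 ≤ l₂ w) ∧ ∀ w ∈ span 𝕜 s, w = l₁ w • u₁ + l₂ w • u₂ := by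
  obtain ⟨ψ, u, hus, v, hvs, hu0, hv0, huv⟩ :=
    exists_dual_ratio_ne_of_one_lt_finrank (by omega) φ fun w hw hw0 => (hφ w hw hw0).ne'
  set t : E → 𝕜 := fun w => ψ w / φ w
  have hs' : {w ∈ s | w ≠ 0}.Finite := hs.subset (Set.sep_subset _ _)
  obtain ⟨u₁, ⟨hu₁s, hu₁0⟩, hmin⟩ := Set.exists_min_image _ t hs' ⟨u, hus, hu0⟩
  obtain ⟨u₂, ⟨hu₂s, hu₂0⟩, hmax⟩ := Set.exists_max_image _ t hs' ⟨u, hus, hu0⟩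
  have hlt : t u₁ < t u₂ := by
    have := hmin u ⟨hus, hu0⟩; have := hmax u ⟨hus, hu0⟩
    have := hmin v ⟨hvs, hv0⟩; have := hmax v ⟨hvs, hv0⟩
    by_contra!
    exact huv (le_antisymm (by linarith) (by linarith))
  have hφ₁ := hφ u₁ hu₁s hu₁0
  have hφ₂ := hφ u₂ hu₂s hu₂0
  obtain ⟨l₁, l₂, hwedge, h₁₁, h₁₂, h₂₁, h₂₂⟩ := exists_dual_nonneg_on_wedge φ ψ hlt hφ₁ hφ₂
    (div_mul_cancel₀ _ hφ₁.ne').symm (div_mul_cancel₀ _ hφ₂.ne').symm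
  refine ⟨u₁, hu₁s, u₂, hu₂s, l₁, l₂, fun w hw => ?_, fun w hw =>
    eq_smul_add_smul_of_finrank_eq_two hrank (subset_span hu₁s) (subset_span hu₂s)
      h₁₁ h₁₂ h₂₁ h₂₂ hw⟩
  rcases eq_or_ne w 0 with rfl | hw0
  · simp
  have hφw := hφ w hw hw0
  exact hwedge w ((le_div_iff₀ hφw).mp (hmin w ⟨hw, hw0⟩))
    ((div_le_iff₀ hφw).mp (hmax w ⟨hw, hw0⟩))
end

theorem sum_smul_mem_orderCone {P ι : Type*} [PartialOrder P] [Fintype ι] {a : ι → P → ℝ}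
    {c : ι → ℝ} (ha : ∀ i, a i ∈ orderCone P) (hc : ∀ i, 0 ≤ c i) :
    ∑ i, c i • a i ∈ orderCone P := by
  refine ⟨fun x => ?_, fun x y hxy => ?_⟩
  · simpa only [Finset.sum_apply, Pi.smul_apply] using
      Finset.sum_nonneg fun i _ => smul_nonneg (hc i) ((ha i).1 x)
  · simpa only [Finset.sum_apply, Pi.smul_apply] using
      Finset.sum_le_sum fun i _ => smul_le_smul_of_nonneg_left ((ha i).2 hxy) (hc i)

theorem sum_pos_of_mem_orderCone {P : Type*} [PartialOrder P] [Fintype P] {f : P → ℝ}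
    (hf : f ∈ orderCone P) (hf0 : f ≠ 0) : 0 < ∑ x, f x := by
  obtain ⟨x, hx⟩ := Function.ne_iff.mp hf0
  exact Finset.sum_pos' (fun y _ => hf.1 y) ⟨x, Finset.mem_univ x, (hf.1 x).lt_of_ne' hx⟩

section Matrix
variable {P₁ P₂ : Type*} [PartialOrder P₂]

def columnsAndIncrements (T : Matrix P₁ P₂ ℝ) : Set (P₁ → ℝ) :=
  Set.range T.col ∪ (fun p : P₂ × P₂ => T.col p.2 - T.col p.1) '' {p | p.1 ≤ p.2}

theorem finite_columnsAndIncrements [Finite P₂] (T : Matrix P₁ P₂ ℝ) :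
    (columnsAndIncrements T).Finite :=
  (Set.finite_range _).union ((Set.toFinite _).image _)

theorem span_columnsAndIncrements (T : Matrix P₁ P₂ ℝ) :
    span ℝ (columnsAndIncrements T) = span ℝ (Set.range T.col) := by
  refine le_antisymm (span_le.mpr ?_) (span_mono Set.subset_union_left)
  rintro _ (hw | ⟨p, -, rfl⟩)
  · exact subset_span hw
  · exact sub_mem (subset_span ⟨p.2, rfl⟩) (subset_span ⟨p.1, rfl⟩)

theorem columnsAndIncrements_subset_orderCone [PartialOrder P₁] {T : Matrix P₁ P₂ ℝ} {r : ℕ}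
    {a : Fin r → P₁ → ℝ} {b : Fin r → P₂ → ℝ} (ha : ∀ i, a i ∈ orderCone P₁)
    (hb : ∀ i, b i ∈ orderCone P₂) (hT : ∀ x y, T x y = ∑ i, a i x * b i y) :
    columnsAndIncrements T ⊆ orderCone P₁ := by
  have hcol : ∀ y, T.col y = ∑ i, b i y • a i := fun y => by
    ext x
    simp [hT, mul_comm]
  rintro _ (⟨y, rfl⟩ | ⟨⟨y, y'⟩, hyy' : y ≤ y', rfl⟩)
  · exact hcol y ▸ sum_smul_mem_orderCone ha fun i => (hb i).1 y
  · simp only [hcol, ← Finset.sum_sub_distrib, ← sub_smul]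
    exact sum_smul_mem_orderCone ha fun i => sub_nonneg.mpr ((hb i).2 hyy')

theorem apply_col_mem_orderCone {T : Matrix P₁ P₂ ℝ} {l : Dual ℝ (P₁ → ℝ)}
    (hl : ∀ w ∈ columnsAndIncrements T, 0 ≤ l w) : (fun y => l (T.col y)) ∈ orderCone P₂ := by
  refine ⟨fun y => hl _ (Or.inl ⟨y, rfl⟩), fun y y' hyy' => ?_⟩
  have := hl _ (Or.inr ⟨(y, y'), hyy', rfl⟩)
  simpa only [map_sub, sub_nonneg] using this

end Matrix

/-- a rank-two matrix with a finite ND factorization has an ND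
factorization with exactly two terms. -/
theorem rank_two_implies_NDrank_two
    (P₁ P₂ : Type*) [Fintype P₁] [Fintype P₂] [PartialOrder P₁] [PartialOrder P₂]
    (T : Matrix P₁ P₂ ℝ) (hrank : T.rank = 2)
    (hT : ∃ (r : ℕ) (a : Fin r → P₁ → ℝ) (b : Fin r → P₂ → ℝ),
      (∀ i, a i ∈ orderCone P₁) ∧ (∀ i, b i ∈ orderCone P₂) ∧
      ∀ x y, T x y = ∑ i, a i x * b i y) :
    ∃ (a' : Fin 2 → P₁ → ℝ) (b' : Fin 2 → P₂ → ℝ),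
      (∀ i, a' i ∈ orderCone P₁) ∧ (∀ i, b' i ∈ orderCone P₂) ∧
      ∀ x y, T x y = ∑ i, a' i x * b' i y := by
  obtain ⟨r, a, b, ha, hb, hfac⟩ := hT
  have hcone := columnsAndIncrements_subset_orderCone ha hb hfac
  obtain ⟨u₁, hu₁, u₂, hu₂, l₁, l₂, hl, hdecomp⟩ :=
    (finite_columnsAndIncrements T).exists_extreme_pair_of_finrank_span_eq_two
      (by rw [span_columnsAndIncrements, ← Matrix.rank_eq_finrank_span_cols, hrank])
      (∑ x, LinearMap.proj x) fun w hw hw0 => by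
        simpa using sum_pos_of_mem_orderCone (hcone hw) hw0
  refine ⟨![u₁, u₂], ![fun y => l₁ (T.col y), fun y => l₂ (T.col y)],
    Fin.forall_fin_two.mpr ⟨hcone hu₁, hcone hu₂⟩,
    Fin.forall_fin_two.mpr ⟨apply_col_mem_orderCone fun w hw => (hl w hw).1,
      apply_col_mem_orderCone fun w hw => (hl w hw).2⟩, fun x y => ?_⟩
  have := congrFun (hdecomp (T.col y) (subset_span (Or.inl ⟨y, rfl⟩))) x
  simpa [Fin.sum_univ_two, mul_comm] using this
end

section
/- Let P₁ and P₂ be finite partially ordered sets and let r ∈ ℕ. The set N_{≤r} = { ∑_{i=1}^r a_i b_iᵀ : a_i ∈ C(P₁), b_i ∈ C(P₂) } of matrices admitting an ND factorization with at most r terms is a closed subset of ℝ^{P₁×P₂}. -/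
open Set

theorem IsClosed.image_of_isCompact_inter_preimage {X Y : Type*} [TopologicalSpace X]
    [TopologicalSpace Y] [CompactlyGeneratedSpace Y] [T2Space Y] {f : X → Y} {S : Set X}
    (hf : ContinuousOn f S) (hS : ∀ ⦃K⦄, IsCompact K → IsCompact (S ∩ f ⁻¹' K)) :
    IsClosed (f '' S) :=
  CompactlyGeneratedSpace.isClosed fun K hK => by
    rw [← image_inter_preimage]
    exact ((hS hK).image_of_continuousOn (hf.mono inter_subset_left)).isClosed

section NormalizedTerm

variable {ι P Q : Type*} [PartialOrder P] [PartialOrder Q]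

theorem isClosed_orderCone : IsClosed (orderCone P) := by
  have h : orderCone P =
      (⋂ x, {f | 0 ≤ f x}) ∩ ⋂ (x) (y) (_ : x ≤ y), {f : P → ℝ | f x ≤ f y} := by
    ext f
    simp [orderCone]
  rw [h]
  exact (isClosed_iInter fun x => isClosed_le continuous_const (continuous_apply x)).inter <|
    isClosed_iInter fun x => isClosed_iInter fun y => isClosed_iInter fun _ =>
      isClosed_le (continuous_apply x) (continuous_apply y)

theorem smul_mem_orderCone {c : ℝ} (hc : 0 ≤ c) {a : P → ℝ} (ha : a ∈ orderCone P) :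
    c • a ∈ orderCone P :=
  ⟨fun x => mul_nonneg hc (ha.1 x), fun _ _ hxy => mul_le_mul_of_nonneg_left (ha.2 hxy) hc⟩

variable [Fintype P]

/-- The last condition says that `b = 0` or `∑ₓ a x = 1`, in a form that is closed in `(a, b)`. -/
def IsNormalizedTerm (a : P → ℝ) (b : Q → ℝ) : Prop :=
  a ∈ orderCone P ∧ b ∈ orderCone Q ∧ ∑ x, a x ≤ 1 ∧ ∀ y, b y ≤ (∑ x, a x) * b y

theorem IsNormalizedTerm.le_one {a : P → ℝ} {b : Q → ℝ} (h : IsNormalizedTerm a b) (x : P) :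
    a x ≤ 1 :=
  (Finset.single_le_sum (fun x _ => h.1.1 x) (Finset.mem_univ x)).trans h.2.2.1

theorem exists_isNormalizedTerm {a : P → ℝ} {b : Q → ℝ} (ha : a ∈ orderCone P)
    (hb : b ∈ orderCone Q) :
    ∃ a' b', IsNormalizedTerm a' b' ∧ ∀ x y, a' x * b' y = a x * b y := by
  have hs : 0 ≤ ∑ x, a x := Finset.sum_nonneg fun x _ => ha.1 x
  rcases hs.eq_or_lt with hs | hs
  · have ha0 : ∀ x, a x = 0 := fun x =>
      (Finset.sum_eq_zero_iff_of_nonneg fun x _ => ha.1 x).mp hs.symm x (Finset.mem_univ x)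
    refine ⟨a, 0, ⟨ha, zero_smul ℝ b ▸ smul_mem_orderCone le_rfl hb, ?_, fun _ => ?_⟩, ?_⟩ <;>
      simp [ha0]
  · refine ⟨(∑ x, a x)⁻¹ • a, (∑ x, a x) • b, ⟨smul_mem_orderCone (inv_nonneg.mpr hs.le) ha,
      smul_mem_orderCone hs.le hb, ?_, fun y => ?_⟩, fun x y => ?_⟩
    · simp [← Finset.mul_sum, inv_mul_cancel₀ hs.ne']
    · simp [← Finset.mul_sum, inv_mul_cancel₀ hs.ne']
    · simp only [Pi.smul_apply, smul_eq_mul]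
      field_simp

theorem isClosed_setOf_isNormalizedTerm :
    IsClosed {p : (P → ℝ) × (Q → ℝ) | IsNormalizedTerm p.1 p.2} := by
  have hsum : Continuous fun p : (P → ℝ) × (Q → ℝ) => ∑ x, p.1 x :=
    continuous_finsetSum _ fun x _ => (continuous_apply x).comp continuous_fst
  refine (isClosed_orderCone.preimage continuous_fst).inter <|
    (isClosed_orderCone.preimage continuous_snd).inter <|
    (isClosed_le hsum continuous_const).inter ?_
  change IsClosed {p : (P → ℝ) × (Q → ℝ) | ∀ y, p.2 y ≤ (∑ x, p.1 x) * p.2 y}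
  rw [ofPred_forall]
  exact isClosed_iInter fun y => isClosed_le ((continuous_apply y).comp continuous_snd)
    (hsum.mul ((continuous_apply y).comp continuous_snd))

variable (ι P Q) in
def normalizedFactorizations : Set ((ι → P → ℝ) × (ι → Q → ℝ)) :=
  {p | ∀ i, IsNormalizedTerm (p.1 i) (p.2 i)}

theorem isClosed_normalizedFactorizations : IsClosed (normalizedFactorizations ι P Q) := by
  rw [normalizedFactorizations, ofPred_forall]
  exact isClosed_iInter fun i => isClosed_setOf_isNormalizedTerm.preimage
    (f := fun p : (ι → P → ℝ) × (ι → Q → ℝ) => (p.1 i, p.2 i)) (by fun_prop)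

end NormalizedTerm

section NDFactorization

variable {ι P Q : Type*} [Fintype ι]

def sumOuter (a : ι → P → ℝ) (b : ι → Q → ℝ) : P → Q → ℝ :=
  fun x y => ∑ i, a i x * b i y

theorem continuous_sumOuter :
    Continuous fun p : (ι → P → ℝ) × (ι → Q → ℝ) => sumOuter p.1 p.2 := by
  unfold sumOuter
  fun_prop

variable [Fintype P] [PartialOrder P] [PartialOrder Q]

theorem le_sum_sumOuter {a : ι → P → ℝ} {b : ι → Q → ℝ} (h : ∀ i, IsNormalizedTerm (a i) (b i))
    (i : ι) (y : Q) : b i y ≤ ∑ x, sumOuter a b x y :=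
  calc b i y ≤ ∑ x, a i x * b i y := by rw [← Finset.sum_mul]; exact (h i).2.2.2 y
    _ ≤ ∑ x, sumOuter a b x y := Finset.sum_le_sum fun x _ =>
      Finset.single_le_sum (f := fun j => a j x * b j y)
        (fun j _ => mul_nonneg ((h j).1.1 x) ((h j).2.1.1 y)) (Finset.mem_univ i)

theorem isCompact_normalizedFactorizations_inter_preimage {K : Set (P → Q → ℝ)}
    (hK : IsCompact K) :
    IsCompact (normalizedFactorizations ι P Q ∩ (fun p => sumOuter p.1 p.2) ⁻¹' K) := by
  have hbdd : ∀ x y, BddAbove ((fun T : P → Q → ℝ => T x y) '' K) := fun x y =>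
    (hK.image (by fun_prop)).bddAbove
  choose U hU using hbdd
  refine (isCompact_Icc (a := (0, 0)) (b := (1, fun _ y => ∑ x, U x y))).of_isClosed_subset
    (isClosed_normalizedFactorizations.inter (hK.isClosed.preimage continuous_sumOuter)) ?_
  rintro ⟨a, b⟩ ⟨hab, hT⟩
  refine ⟨⟨fun i x => (hab i).1.1 x, fun i y => (hab i).2.1.1 y⟩,
    fun i x => (hab i).le_one x, fun i y => ?_⟩
  exact (le_sum_sumOuter hab i y).trans (Finset.sum_le_sum fun x _ => hU x y ⟨_, hT, rfl⟩)

theorem setOf_eq_sumOuter_image_normalizedFactorizations :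
    {T : P → Q → ℝ | ∃ (a : ι → P → ℝ) (b : ι → Q → ℝ),
      (∀ i, a i ∈ orderCone P) ∧ (∀ i, b i ∈ orderCone Q) ∧
      ∀ x y, T x y = ∑ i, a i x * b i y} =
      (fun p => sumOuter p.1 p.2) '' normalizedFactorizations ι P Q := by
  ext T
  constructor
  · rintro ⟨a, b, ha, hb, hT⟩
    choose a' b' hab' heq using fun i => exists_isNormalizedTerm (ha i) (hb i)
    exact ⟨(a', b'), hab', funext₂ fun x y => by simp [sumOuter, heq, hT]⟩
  · rintro ⟨⟨a, b⟩, hab, rfl⟩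
    exact ⟨a, b, fun i => (hab i).1, fun i => (hab i).2.1, fun _ _ => rfl⟩

end NDFactorization

/-- the set of matrices admitting an ND factorization with at most `r`
terms is closed. -/
theorem NDrank_le_r_isClosed
    (P₁ P₂ : Type*) [Fintype P₁] [Fintype P₂] [PartialOrder P₁] [PartialOrder P₂]
    (r : ℕ) :
    IsClosed {T : P₁ → P₂ → ℝ | ∃ (a : Fin r → P₁ → ℝ) (b : Fin r → P₂ → ℝ),
      (∀ i, a i ∈ orderCone P₁) ∧ (∀ i, b i ∈ orderCone P₂) ∧
      ∀ x y, T x y = ∑ i, a i x * b i y} := by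
  rw [setOf_eq_sumOuter_image_normalizedFactorizations]
  exact IsClosed.image_of_isCompact_inter_preimage continuous_sumOuter.continuousOn
    fun _ => isCompact_normalizedFactorizations_inter_preimage
end
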